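/- arXiv:1811.06057 — 5 statements merged into one kernel-verified Lean document; each statement's English description precedes it below -/
import Mathlib

section
/- Let f : [0,∞) → ℝ be locally Lipschitz and let Q_1, Q_2 be joint distributions on finite S × X and W a channel from X to finite Y. Let m_S = min over i ∈ {1,2} and s ∈ S of the S-marginal of Q_i at s, and assume m_S > 0. Then the f-information satisfies |I_f(P_{S_1,Y_1}) − I_f(P_{S_2,Y_2})| ≤ (2 K_{f,1/m_S} + (2/m_S + 1) L_{f,1/m_S}) ‖Q_1 − Q_2‖_1, where K_{f,u} = sup_{t∈[0,u]} |f(t)|, L_{f,u} is the Lipschitz constant of f on [0,u], and P_{S_i,Y_i}(s,y) = Σ_x Q_i(s,x) W(x,y). -/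
/-- `f`-information of a joint distribution `R` on `U × V`, with the convention that
a summand is `0` whenever the product of marginals vanishes. -/
noncomputable def fInfo {U V : Type*} [Fintype U] [Fintype V] (f : ℝ → ℝ)
    (R : U → V → ℝ) : ℝ :=
  ∑ u, ∑ v,
    (if (∑ v', R u v') * (∑ u', R u' v) = 0 then 0
     else (∑ v', R u v') * (∑ u', R u' v) * f (R u v / ((∑ v', R u v') * (∑ u', R u' v))))

lemma pointwise_bound (f : ℝ → ℝ) (mS K L A₁ B₁ P₁ A₂ B₂ P₂ : ℝ)
    (hmS : 0 < mS) (hA₁ : mS ≤ A₁) (hA₂ : mS ≤ A₂)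
    (hB₁ : 0 ≤ B₁) (hB₂ : 0 ≤ B₂) (hP₁ : 0 ≤ P₁) (hP₂ : 0 ≤ P₂)
    (hPB₁ : P₁ ≤ B₁) (hPB₂ : P₂ ≤ B₂)
    (hK : ∀ t ∈ Set.Icc (0:ℝ) (1/mS), |f t| ≤ K)
    (hL : ∀ t₁ ∈ Set.Icc (0:ℝ) (1/mS), ∀ t₂ ∈ Set.Icc (0:ℝ) (1/mS),
      |f t₁ - f t₂| ≤ L * |t₁ - t₂|) :
    |(if A₁ * B₁ = 0 then (0:ℝ) else A₁ * B₁ * f (P₁ / (A₁ * B₁))) -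
     (if A₂ * B₂ = 0 then (0:ℝ) else A₂ * B₂ * f (P₂ / (A₂ * B₂)))| ≤
      (K + L / mS) * (A₁ * |B₁ - B₂| + |A₁ - A₂| * B₂) + L * |P₁ - P₂| := by
  have hA₁0 : (0:ℝ) < A₁ := hmS.trans_le hA₁
  have hA₂0 : (0:ℝ) < A₂ := hmS.trans_le hA₂
  have hminv : (0:ℝ) < 1 / mS := by positivity
  have h0m : (0:ℝ) ∈ Set.Icc (0:ℝ) (1/mS) := ⟨le_refl _, hminv.le⟩
  have h1m : (1/mS) ∈ Set.Icc (0:ℝ) (1/mS) := ⟨hminv.le, le_refl _⟩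
  have hK0 : 0 ≤ K := (abs_nonneg _).trans (hK 0 h0m)
  have hL0 : 0 ≤ L := by
    have h := (abs_nonneg _).trans (hL 0 h0m (1/mS) h1m)
    rw [zero_sub, abs_neg, abs_of_pos hminv] at h
    nlinarith [hminv]
  set t₁ : ℝ := if B₁ = 0 then 0 else P₁ / (A₁ * B₁) with ht₁def
  set t₂ : ℝ := if B₂ = 0 then 0 else P₂ / (A₂ * B₂) with ht₂def
  have hmem : ∀ (A B P : ℝ), mS ≤ A → 0 ≤ B → 0 ≤ P → P ≤ B →
      (if B = 0 then (0:ℝ) else P / (A * B)) ∈ Set.Icc (0:ℝ) (1/mS) := by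
    intro A B P hA hB hP hPB
    by_cases hBz : B = 0
    · simp [hBz]; exact hmS.le
    · have hBpos : 0 < B := lt_of_le_of_ne hB (Ne.symm hBz)
      have hApos : 0 < A := hmS.trans_le hA
      simp only [hBz, if_false]
      constructor
      · positivity
      · rw [div_le_div_iff₀ (by positivity) hmS]
        nlinarith
  have ht₁m : t₁ ∈ Set.Icc (0:ℝ) (1/mS) := hmem A₁ B₁ P₁ hA₁ hB₁ hP₁ hPB₁
  have ht₂m : t₂ ∈ Set.Icc (0:ℝ) (1/mS) := hmem A₂ B₂ P₂ hA₂ hB₂ hP₂ hPB₂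
  have hterm₁ : (if A₁ * B₁ = 0 then (0:ℝ) else A₁ * B₁ * f (P₁ / (A₁ * B₁)))
      = A₁ * B₁ * f t₁ := by
    by_cases hBz : B₁ = 0
    · simp [ht₁def, hBz]
    · have hne : A₁ * B₁ ≠ 0 := mul_ne_zero hA₁0.ne' hBz
      simp [ht₁def, hBz, hne]
  have hterm₂ : (if A₂ * B₂ = 0 then (0:ℝ) else A₂ * B₂ * f (P₂ / (A₂ * B₂)))
      = A₂ * B₂ * f t₂ := by
    by_cases hBz : B₂ = 0
    · simp [ht₂def, hBz]
    · have hne : A₂ * B₂ ≠ 0 := mul_ne_zero hA₂0.ne' hBz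
      simp [ht₂def, hBz, hne]
  have hPt : ∀ (A B P : ℝ), 0 < A → 0 ≤ B → 0 ≤ P → P ≤ B →
      A * B * (if B = 0 then (0:ℝ) else P / (A * B)) = P := by
    intro A B P hA hB hP hPB
    by_cases hBz : B = 0
    · have : P = 0 := le_antisymm (hBz ▸ hPB) hP
      simp [hBz, this]
    · have hne : A * B ≠ 0 := mul_ne_zero hA.ne' hBz
      simp only [hBz, if_false]
      field_simp
  have hPt₁ : A₁ * B₁ * t₁ = P₁ := hPt A₁ B₁ P₁ hA₁0 hB₁ hP₁ hPB₁
  have hPt₂ : A₂ * B₂ * t₂ = P₂ := hPt A₂ B₂ P₂ hA₂0 hB₂ hP₂ hPB₂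
  rw [hterm₁, hterm₂]
  have hAB₂nn : (0:ℝ) ≤ A₂ * B₂ := by positivity
  have habsAB : |A₁ * B₁ - A₂ * B₂| ≤ A₁ * |B₁ - B₂| + |A₁ - A₂| * B₂ := by
    have h : A₁ * B₁ - A₂ * B₂ = A₁ * (B₁ - B₂) + (A₁ - A₂) * B₂ := by ring
    rw [h]
    refine (abs_add_le _ _).trans ?_
    rw [abs_mul, abs_mul, abs_of_nonneg hA₁0.le, abs_of_nonneg hB₂]
  have key : A₂ * B₂ * |t₁ - t₂| ≤ |A₁ * B₁ - A₂ * B₂| / mS + |P₁ - P₂| := by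
    have h1 : A₂ * B₂ * (t₁ - t₂) = (A₂ * B₂ - A₁ * B₁) * t₁ + (P₁ - P₂) := by
      rw [mul_sub, hPt₂, ← hPt₁]; ring
    have h2 : A₂ * B₂ * |t₁ - t₂| = |A₂ * B₂ * (t₁ - t₂)| := by
      rw [abs_mul, abs_of_nonneg hAB₂nn]
    rw [h2, h1]
    refine (abs_add_le _ _).trans ?_
    have h3 : |(A₂ * B₂ - A₁ * B₁) * t₁| ≤ |A₁ * B₁ - A₂ * B₂| / mS := by
      rw [abs_mul, abs_of_nonneg ht₁m.1, abs_sub_comm, div_eq_mul_inv, ← one_div]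
      exact mul_le_mul_of_nonneg_left ht₁m.2 (abs_nonneg _)
    linarith [abs_abs (P₁ - P₂)]
  calc |A₁ * B₁ * f t₁ - A₂ * B₂ * f t₂|
      = |(A₁ * B₁ - A₂ * B₂) * f t₁ + A₂ * B₂ * (f t₁ - f t₂)| := by
        congr 1; ring
    _ ≤ |(A₁ * B₁ - A₂ * B₂) * f t₁| + |A₂ * B₂ * (f t₁ - f t₂)| := abs_add_le _ _
    _ = |A₁ * B₁ - A₂ * B₂| * |f t₁| + A₂ * B₂ * |f t₁ - f t₂| := by
        rw [abs_mul, abs_mul, abs_of_nonneg hAB₂nn]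
    _ ≤ |A₁ * B₁ - A₂ * B₂| * K + A₂ * B₂ * (L * |t₁ - t₂|) := by
        gcongr
        · exact hK t₁ ht₁m
        · exact hL t₁ ht₁m t₂ ht₂m
    _ = |A₁ * B₁ - A₂ * B₂| * K + L * (A₂ * B₂ * |t₁ - t₂|) := by ring
    _ ≤ |A₁ * B₁ - A₂ * B₂| * K + L * (|A₁ * B₁ - A₂ * B₂| / mS + |P₁ - P₂|) := by
        gcongr
    _ = (K + L / mS) * |A₁ * B₁ - A₂ * B₂| + L * |P₁ - P₂| := by
        field_simp; ring
    _ ≤ (K + L / mS) * (A₁ * |B₁ - B₂| + |A₁ - A₂| * B₂) + L * |P₁ - P₂| := by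
        gcongr

lemma K_nonneg (f : ℝ → ℝ) (mS K : ℝ) (hmS : 0 < mS)
    (hK : ∀ t ∈ Set.Icc (0:ℝ) (1/mS), |f t| ≤ K) : 0 ≤ K :=
  (abs_nonneg _).trans (hK 0 ⟨le_refl _, by positivity⟩)

lemma L_nonneg (f : ℝ → ℝ) (mS L : ℝ) (hmS : 0 < mS)
    (hL : ∀ t₁ ∈ Set.Icc (0:ℝ) (1/mS), ∀ t₂ ∈ Set.Icc (0:ℝ) (1/mS),
      |f t₁ - f t₂| ≤ L * |t₁ - t₂|) : 0 ≤ L := by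
  have hminv : (0:ℝ) < 1 / mS := by positivity
  have h := (abs_nonneg _).trans
    (hL 0 ⟨le_refl _, hminv.le⟩ (1/mS) ⟨hminv.le, le_refl _⟩)
  rw [zero_sub, abs_neg, abs_of_pos hminv] at h
  nlinarith [hminv]

lemma fInfo_diff_bound {S Y : Type*} [Fintype S] [Fintype Y]
    (f : ℝ → ℝ) (P₁ P₂ : S → Y → ℝ) (mS K L : ℝ)
    (h₁0 : ∀ s y, 0 ≤ P₁ s y) (h₂0 : ∀ s y, 0 ≤ P₂ s y)
    (hmS : 0 < mS)
    (hm₁ : ∀ s, mS ≤ ∑ y, P₁ s y) (hm₂ : ∀ s, mS ≤ ∑ y, P₂ s y)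
    (ht₁ : ∑ s, ∑ y, P₁ s y = 1) (ht₂ : ∑ s, ∑ y, P₂ s y = 1)
    (hK : ∀ t ∈ Set.Icc (0:ℝ) (1/mS), |f t| ≤ K)
    (hL : ∀ t₁ ∈ Set.Icc (0:ℝ) (1/mS), ∀ t₂ ∈ Set.Icc (0:ℝ) (1/mS),
      |f t₁ - f t₂| ≤ L * |t₁ - t₂|) :
    |fInfo f P₁ - fInfo f P₂| ≤
      (2 * K + (2 / mS + 1) * L) * ∑ s, ∑ y, |P₁ s y - P₂ s y| := by
  have hK0 : 0 ≤ K := K_nonneg f mS K hmS hK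
  have hL0 : 0 ≤ L := L_nonneg f mS L hmS hL
  set a₁ : S → ℝ := fun s => ∑ y, P₁ s y with ha₁
  set a₂ : S → ℝ := fun s => ∑ y, P₂ s y with ha₂
  set b₁ : Y → ℝ := fun y => ∑ s, P₁ s y with hb₁
  set b₂ : Y → ℝ := fun y => ∑ s, P₂ s y with hb₂
  set D : ℝ := ∑ s, ∑ y, |P₁ s y - P₂ s y| with hD
  have hb₁0 : ∀ y, 0 ≤ b₁ y := fun y => Finset.sum_nonneg fun s _ => h₁0 s y
  have hb₂0 : ∀ y, 0 ≤ b₂ y := fun y => Finset.sum_nonneg fun s _ => h₂0 s y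
  have hPb₁ : ∀ s y, P₁ s y ≤ b₁ y := fun s y =>
    Finset.single_le_sum (fun s' _ => h₁0 s' y) (Finset.mem_univ s)
  have hPb₂ : ∀ s y, P₂ s y ≤ b₂ y := fun s y =>
    Finset.single_le_sum (fun s' _ => h₂0 s' y) (Finset.mem_univ s)
  -- step 1: pointwise bound summed
  have step1 : |fInfo f P₁ - fInfo f P₂| ≤
      ∑ s, ∑ y, ((K + L / mS) * (a₁ s * |b₁ y - b₂ y| + |a₁ s - a₂ s| * b₂ y)
        + L * |P₁ s y - P₂ s y|) := by
    unfold fInfo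
    rw [← Finset.sum_sub_distrib]
    refine (Finset.abs_sum_le_sum_abs _ _).trans (Finset.sum_le_sum fun s _ => ?_)
    rw [← Finset.sum_sub_distrib]
    refine (Finset.abs_sum_le_sum_abs _ _).trans (Finset.sum_le_sum fun y _ => ?_)
    exact pointwise_bound f mS K L (a₁ s) (b₁ y) (P₁ s y) (a₂ s) (b₂ y) (P₂ s y)
      hmS (hm₁ s) (hm₂ s) (hb₁0 y) (hb₂0 y) (h₁0 s y) (h₂0 s y)
      (hPb₁ s y) (hPb₂ s y) hK hL
  -- marginal difference bounds
  have hβ : ∑ y, |b₁ y - b₂ y| ≤ D := by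
    rw [hD, Finset.sum_comm]
    refine Finset.sum_le_sum fun y _ => ?_
    rw [hb₁, hb₂, ← Finset.sum_sub_distrib]
    exact Finset.abs_sum_le_sum_abs _ _
  have hα : ∑ s, |a₁ s - a₂ s| ≤ D := by
    refine Finset.sum_le_sum fun s _ => ?_
    rw [ha₁, ha₂, ← Finset.sum_sub_distrib]
    exact Finset.abs_sum_le_sum_abs _ _
  have hsa : ∑ s, a₁ s = 1 := ht₁
  have hsb : ∑ y, b₂ y = 1 := by
    simp only [hb₂]; rw [Finset.sum_comm]; exact ht₂
  -- evaluate the sum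
  have step2 : ∑ s, ∑ y, ((K + L / mS) * (a₁ s * |b₁ y - b₂ y| + |a₁ s - a₂ s| * b₂ y)
        + L * |P₁ s y - P₂ s y|)
      = (K + L / mS) * ((∑ s, a₁ s) * (∑ y, |b₁ y - b₂ y|)
          + (∑ s, |a₁ s - a₂ s|) * (∑ y, b₂ y)) + L * D := by
    have e1 : (∑ s, a₁ s) * (∑ y, |b₁ y - b₂ y|) = ∑ s, ∑ y, a₁ s * |b₁ y - b₂ y| := by
      rw [Finset.sum_mul]
      exact Finset.sum_congr rfl fun s _ => Finset.mul_sum _ _ _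
    have e2 : (∑ s, |a₁ s - a₂ s|) * (∑ y, b₂ y) = ∑ s, ∑ y, |a₁ s - a₂ s| * b₂ y := by
      rw [Finset.sum_mul]
      exact Finset.sum_congr rfl fun s _ => Finset.mul_sum _ _ _
    rw [e1, e2, hD]
    simp only [Finset.mul_sum, ← Finset.sum_add_distrib]
  refine step1.trans ?_
  rw [step2, hsa, hsb, one_mul, mul_one]
  have hCnn : 0 ≤ K + L / mS := by positivity
  have hDnn : 0 ≤ D := Finset.sum_nonneg fun s _ => Finset.sum_nonneg fun y _ => abs_nonneg _
  have : (K + L / mS) * (∑ y, |b₁ y - b₂ y| + ∑ s, |a₁ s - a₂ s|) + L * D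
      ≤ (K + L / mS) * (D + D) + L * D := by
    gcongr
  refine this.trans ?_
  have hmne : mS ≠ 0 := hmS.ne'
  have : (K + L / mS) * (D + D) + L * D = (2 * K + (2 / mS + 1) * L) * D := by
    field_simp; ring
  rw [this]

/-- Local Lipschitz continuity, in the joint distribution, of the `f`-information
between the private variable `S` and the channel output `Y`, where `f` is locally
Lipschitz: here `mS` is a positive lower bound on the `S`-marginals of `Q₁, Q₂`,
`K` bounds `|f|` on `[0, 1/mS]` and `L` is a Lipschitz constant of `f` on `[0, 1/mS]`. -/
theorem stmt_5 {S X Y : Type*} [Fintype S] [Fintype X] [Fintype Y]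
    (f : ℝ → ℝ) (Q₁ Q₂ : S → X → ℝ) (W : X → Y → ℝ) (mS K L : ℝ)
    (hQ₁0 : ∀ s x, 0 ≤ Q₁ s x) (hQ₁1 : ∑ s, ∑ x, Q₁ s x = 1)
    (hQ₂0 : ∀ s x, 0 ≤ Q₂ s x) (hQ₂1 : ∑ s, ∑ x, Q₂ s x = 1)
    (hW0 : ∀ x y, 0 ≤ W x y) (hW1 : ∀ x, ∑ y, W x y = 1)
    (hmS : 0 < mS)
    (hm₁ : ∀ s, mS ≤ ∑ x, Q₁ s x) (hm₂ : ∀ s, mS ≤ ∑ x, Q₂ s x)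
    (hK : ∀ t ∈ Set.Icc (0 : ℝ) (1 / mS), |f t| ≤ K)
    (hL : ∀ t₁ ∈ Set.Icc (0 : ℝ) (1 / mS), ∀ t₂ ∈ Set.Icc (0 : ℝ) (1 / mS),
      |f t₁ - f t₂| ≤ L * |t₁ - t₂|) :
    |fInfo f (fun s y => ∑ x, Q₁ s x * W x y) -
      fInfo f (fun s y => ∑ x, Q₂ s x * W x y)| ≤
      (2 * K + (2 / mS + 1) * L) * ∑ s, ∑ x, |Q₁ s x - Q₂ s x| := by
  have hK0 : 0 ≤ K := K_nonneg f mS K hmS hK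
  have hL0 : 0 ≤ L := L_nonneg f mS L hmS hL
  have hmarg : ∀ (Q : S → X → ℝ) (s : S), ∑ y, ∑ x, Q s x * W x y = ∑ x, Q s x := by
    intro Q s
    rw [Finset.sum_comm]
    exact Finset.sum_congr rfl fun x _ => by rw [← Finset.mul_sum, hW1, mul_one]
  have hP₁0 : ∀ s y, 0 ≤ ∑ x, Q₁ s x * W x y := fun s y =>
    Finset.sum_nonneg fun x _ => mul_nonneg (hQ₁0 s x) (hW0 x y)
  have hP₂0 : ∀ s y, 0 ≤ ∑ x, Q₂ s x * W x y := fun s y =>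
    Finset.sum_nonneg fun x _ => mul_nonneg (hQ₂0 s x) (hW0 x y)
  have hm₁' : ∀ s, mS ≤ ∑ y, ∑ x, Q₁ s x * W x y := fun s => by
    rw [hmarg]; exact hm₁ s
  have hm₂' : ∀ s, mS ≤ ∑ y, ∑ x, Q₂ s x * W x y := fun s => by
    rw [hmarg]; exact hm₂ s
  have ht₁' : ∑ s, ∑ y, ∑ x, Q₁ s x * W x y = 1 := by
    rw [← hQ₁1]; exact Finset.sum_congr rfl fun s _ => hmarg Q₁ s
  have ht₂' : ∑ s, ∑ y, ∑ x, Q₂ s x * W x y = 1 := by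
    rw [← hQ₂1]; exact Finset.sum_congr rfl fun s _ => hmarg Q₂ s
  have key := fInfo_diff_bound f (fun s y => ∑ x, Q₁ s x * W x y)
    (fun s y => ∑ x, Q₂ s x * W x y) mS K L hP₁0 hP₂0 hmS hm₁' hm₂' ht₁' ht₂' hK hL
  refine key.trans ?_
  have hC : 0 ≤ 2 * K + (2 / mS + 1) * L := by positivity
  refine mul_le_mul_of_nonneg_left ?_ hC
  refine Finset.sum_le_sum fun s _ => ?_
  calc ∑ y, |∑ x, Q₁ s x * W x y - ∑ x, Q₂ s x * W x y|
      ≤ ∑ y, ∑ x, |Q₁ s x - Q₂ s x| * W x y := by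
        refine Finset.sum_le_sum fun y _ => ?_
        rw [← Finset.sum_sub_distrib]
        refine (Finset.abs_sum_le_sum_abs _ _).trans (Finset.sum_le_sum fun x _ => ?_)
        rw [← sub_mul, abs_mul, abs_of_nonneg (hW0 x y)]
    _ = ∑ x, |Q₁ s x - Q₂ s x| := by
        rw [Finset.sum_comm]
        exact Finset.sum_congr rfl fun x _ => by rw [← Finset.mul_sum, hW1, mul_one]
end

section
/- Let α ∈ (1,∞) and Q_1, Q_2 joint distributions on finite S × X, W a channel from X to finite Y. Then Arimoto's mutual information of order α satisfies |I_α^A(P_{S_1,Y_1}) − I_α^A(P_{S_2,Y_2})| ≤ (2α/(α−1)) · |S|^{1−1/α} · ‖Q_1 − Q_2‖_1, where P_{S_i,Y_i}(s,y) = Σ_x Q_i(s,x) W(x,y). -/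
/-!
Both quantities inside the logarithm, `∑_y ‖P(·,y)‖_α` and `‖P_S‖_α`, are 1-Lipschitz in the
joint distribution for the ℓ¹ distance (reverse Minkowski, then `‖·‖_α ≤ ‖·‖₁`). Hölder gives
`‖v‖₁ ≤ |S|^(1-1/α) ‖v‖_α`, so on probability distributions both are at least `|S|^(-(1-1/α))`,
where `log` is `|S|^(1-1/α)`-Lipschitz. Finally a stochastic matrix contracts the ℓ¹ distance, so
passing from `Q` to `P` through `W` does not increase it.
-/

/-- Arimoto's mutual information of order `α` of a joint distribution `R` on `S × Y`. -/
noncomputable def arimotoMI {S Y : Type*} [Fintype S] [Fintype Y] (α : ℝ)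
    (R : S → Y → ℝ) : ℝ :=
  (α / (α - 1)) *
    Real.log ((∑ y, (∑ s, R s y ^ α) ^ (1 / α)) / (∑ s, (∑ y, R s y) ^ α) ^ (1 / α))

open Finset

section Lp

variable {ι : Type*} [Fintype ι] {α : ℝ} {f g : ι → ℝ}

lemma Lp_le_L1_of_nonneg (hα : 1 ≤ α) (hf : ∀ i, 0 ≤ f i) :
    (∑ i, f i ^ α) ^ (1 / α) ≤ ∑ i, f i := by
  have hsum : 0 ≤ ∑ i, f i := sum_nonneg fun i _ ↦ hf i
  have hsplit : ∀ {x : ℝ}, 0 ≤ x → x ^ α = x * x ^ (α - 1) := fun hx ↦ by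
    rw [← Real.rpow_one_add' hx (by linarith), add_sub_cancel]
  have key : ∑ i, f i ^ α ≤ (∑ i, f i) ^ α :=
    calc ∑ i, f i ^ α = ∑ i, f i * f i ^ (α - 1) := sum_congr rfl fun i _ ↦ hsplit (hf i)
      _ ≤ ∑ i, f i * (∑ j, f j) ^ (α - 1) := by
        refine sum_le_sum fun i _ ↦ mul_le_mul_of_nonneg_left ?_ (hf i)
        exact Real.rpow_le_rpow (hf i) (single_le_sum (fun j _ ↦ hf j) (mem_univ i)) (by linarith)
      _ = (∑ i, f i) ^ α := by rw [← sum_mul, ← hsplit hsum]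
  calc (∑ i, f i ^ α) ^ (1 / α) ≤ ((∑ i, f i) ^ α) ^ (1 / α) := by
        gcongr
        exact sum_nonneg fun i _ ↦ Real.rpow_nonneg (hf i) α
    _ = ∑ i, f i := by rw [one_div, Real.rpow_rpow_inv hsum (by linarith)]

lemma L1_le_card_rpow_mul_Lp_of_nonneg (hα : 1 ≤ α) (hf : ∀ i, 0 ≤ f i) :
    ∑ i, f i ≤ (Fintype.card ι : ℝ) ^ (1 - 1 / α) * (∑ i, f i ^ α) ^ (1 / α) := by
  simpa using Real.inner_le_weight_mul_Lp_of_nonneg univ hα (fun _ ↦ 1) f (fun _ ↦ zero_le_one) hf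

lemma Lp_sub_Lp_le_of_nonneg (hα : 1 ≤ α) (hf : ∀ i, 0 ≤ f i) (hg : ∀ i, 0 ≤ g i) :
    (∑ i, f i ^ α) ^ (1 / α) - (∑ i, g i ^ α) ^ (1 / α) ≤ (∑ i, |f i - g i| ^ α) ^ (1 / α) := by
  have h := Real.Lp_add_le univ g (fun i ↦ f i - g i) hα
  simp only [add_sub_cancel, abs_of_nonneg (hf _), abs_of_nonneg (hg _)] at h
  linarith

lemma abs_Lp_sub_Lp_le_L1_of_nonneg (hα : 1 ≤ α) (hf : ∀ i, 0 ≤ f i) (hg : ∀ i, 0 ≤ g i) :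
    |(∑ i, f i ^ α) ^ (1 / α) - (∑ i, g i ^ α) ^ (1 / α)| ≤ ∑ i, |f i - g i| := by
  refine le_trans ?_ (Lp_le_L1_of_nonneg hα fun i ↦ abs_nonneg (f i - g i))
  refine abs_sub_le_iff.2 ⟨Lp_sub_Lp_le_of_nonneg hα hf hg, ?_⟩
  simpa only [abs_sub_comm (g _)] using Lp_sub_Lp_le_of_nonneg hα hg hf

end Lp

lemma abs_log_sub_log_le_mul_abs_sub {a b c : ℝ} (hc : 0 < c) (ha : 1 ≤ c * a) (hb : 1 ≤ c * b) :
    |Real.log a - Real.log b| ≤ c * |a - b| := by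
  wlog hba : b ≤ a generalizing a b
  · rw [abs_sub_comm, abs_sub_comm a]
    exact this hb ha (le_of_not_ge hba)
  have hb0 : 0 < b := pos_of_mul_pos_right (by linarith) hc.le
  have ha0 : 0 < a := hb0.trans_le hba
  rw [abs_of_nonneg (sub_nonneg.2 (Real.log_le_log hb0 hba)), abs_of_nonneg (sub_nonneg.2 hba),
    ← Real.log_div ha0.ne' hb0.ne']
  calc Real.log (a / b) ≤ a / b - 1 := Real.log_le_sub_one_of_pos (div_pos ha0 hb0)
    _ = (a - b) / b := by field_simp
    _ ≤ c * (a - b) := by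
      rw [div_le_iff₀ hb0]
      nlinarith

section Channel

variable {X Y : Type*} [Fintype X] [Fintype Y] {W : X → Y → ℝ}

lemma sum_sum_mul_stochastic (hW1 : ∀ x, ∑ y, W x y = 1) (q : X → ℝ) :
    ∑ y, ∑ x, q x * W x y = ∑ x, q x := by
  rw [sum_comm]
  simp_rw [← mul_sum, hW1, mul_one]

lemma sum_abs_sum_mul_stochastic_le (hW0 : ∀ x y, 0 ≤ W x y) (hW1 : ∀ x, ∑ y, W x y = 1)
    (d : X → ℝ) : ∑ y, |∑ x, d x * W x y| ≤ ∑ x, |d x| :=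
  calc ∑ y, |∑ x, d x * W x y| ≤ ∑ y, ∑ x, |d x| * W x y := by
        refine sum_le_sum fun y _ ↦ (abs_sum_le_sum_abs _ _).trans_eq ?_
        simp_rw [abs_mul, abs_of_nonneg (hW0 _ y)]
    _ = ∑ x, |d x| := sum_sum_mul_stochastic hW1 _

end Channel

section Arimoto

variable {S Y : Type*} [Fintype S] [Fintype Y] {α : ℝ}

lemma sum_sum_le_card_rpow_mul_sum_Lp (hα : 1 ≤ α) {R : S → Y → ℝ} (hR : ∀ s y, 0 ≤ R s y) :
    ∑ s, ∑ y, R s y ≤ (Fintype.card S : ℝ) ^ (1 - 1 / α) * ∑ y, (∑ s, R s y ^ α) ^ (1 / α) := by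
  rw [sum_comm, mul_sum]
  exact sum_le_sum fun y _ ↦ L1_le_card_rpow_mul_Lp_of_nonneg hα fun s ↦ hR s y

lemma abs_sum_Lp_sub_sum_Lp_le (hα : 1 ≤ α) {R₁ R₂ : S → Y → ℝ} (hR₁ : ∀ s y, 0 ≤ R₁ s y)
    (hR₂ : ∀ s y, 0 ≤ R₂ s y) :
    |∑ y, (∑ s, R₁ s y ^ α) ^ (1 / α) - ∑ y, (∑ s, R₂ s y ^ α) ^ (1 / α)| ≤
      ∑ s, ∑ y, |R₁ s y - R₂ s y| := by
  rw [← sum_sub_distrib, sum_comm (f := fun s y ↦ |R₁ s y - R₂ s y|)]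
  exact (abs_sum_le_sum_abs _ _).trans <| sum_le_sum fun y _ ↦
    abs_Lp_sub_Lp_le_L1_of_nonneg hα (fun s ↦ hR₁ s y) (fun s ↦ hR₂ s y)

lemma abs_Lp_sum_sub_Lp_sum_le (hα : 1 ≤ α) {R₁ R₂ : S → Y → ℝ} (hR₁ : ∀ s y, 0 ≤ R₁ s y)
    (hR₂ : ∀ s y, 0 ≤ R₂ s y) :
    |(∑ s, (∑ y, R₁ s y) ^ α) ^ (1 / α) - (∑ s, (∑ y, R₂ s y) ^ α) ^ (1 / α)| ≤
      ∑ s, ∑ y, |R₁ s y - R₂ s y| := by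
  refine (abs_Lp_sub_Lp_le_L1_of_nonneg hα (fun s ↦ sum_nonneg fun y _ ↦ hR₁ s y)
    (fun s ↦ sum_nonneg fun y _ ↦ hR₂ s y)).trans (sum_le_sum fun s _ ↦ ?_)
  rw [← sum_sub_distrib]
  exact abs_sum_le_sum_abs _ _

theorem abs_arimotoMI_sub_le (hα : 1 < α) {R₁ R₂ : S → Y → ℝ}
    (hR₁0 : ∀ s y, 0 ≤ R₁ s y) (hR₁1 : ∑ s, ∑ y, R₁ s y = 1)
    (hR₂0 : ∀ s y, 0 ≤ R₂ s y) (hR₂1 : ∑ s, ∑ y, R₂ s y = 1) :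
    |arimotoMI α R₁ - arimotoMI α R₂| ≤
      2 * α / (α - 1) * (Fintype.card S : ℝ) ^ (1 - 1 / α) * ∑ s, ∑ y, |R₁ s y - R₂ s y| := by
  set c := (Fintype.card S : ℝ) ^ (1 - 1 / α)
  have hk : 0 ≤ α / (α - 1) := div_nonneg (by linarith) (by linarith)
  have hc : 0 < c := by
    refine Real.rpow_pos_of_pos (Nat.cast_pos.2 (Fintype.card_pos_iff.2 ?_)) _
    exact (univ_nonempty_iff.1 (nonempty_of_sum_ne_zero (by rw [hR₁1]; exact one_ne_zero)))
  have hNum : ∀ {R : S → Y → ℝ}, (∀ s y, 0 ≤ R s y) → ∑ s, ∑ y, R s y = 1 →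
      1 ≤ c * ∑ y, (∑ s, R s y ^ α) ^ (1 / α) := fun hR0 hR1 ↦
    hR1.symm.le.trans <| sum_sum_le_card_rpow_mul_sum_Lp hα.le hR0
  have hDen : ∀ {R : S → Y → ℝ}, (∀ s y, 0 ≤ R s y) → ∑ s, ∑ y, R s y = 1 →
      1 ≤ c * (∑ s, (∑ y, R s y) ^ α) ^ (1 / α) := fun hR0 hR1 ↦
    hR1.symm.le.trans <| L1_le_card_rpow_mul_Lp_of_nonneg hα.le fun s ↦ sum_nonneg fun y _ ↦ hR0 s y
  have hN₁ := hNum hR₁0 hR₁1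
  have hN₂ := hNum hR₂0 hR₂1
  have hD₁ := hDen hR₁0 hR₁1
  have hD₂ := hDen hR₂0 hR₂1
  have hlogN := (abs_log_sub_log_le_mul_abs_sub hc hN₁ hN₂).trans
    (mul_le_mul_of_nonneg_left (abs_sum_Lp_sub_sum_Lp_le hα.le hR₁0 hR₂0) hc.le)
  have hlogD := (abs_log_sub_log_le_mul_abs_sub hc hD₁ hD₂).trans
    (mul_le_mul_of_nonneg_left (abs_Lp_sum_sub_Lp_sum_le hα.le hR₁0 hR₂0) hc.le)
  have hne : ∀ {x : ℝ}, 1 ≤ c * x → x ≠ 0 := fun h ↦ right_ne_zero_of_mul (one_pos.trans_le h).ne'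
  rw [arimotoMI, arimotoMI, Real.log_div (hne hN₁) (hne hD₁), Real.log_div (hne hN₂) (hne hD₂),
    ← mul_sub, abs_mul, abs_of_nonneg hk, sub_sub_sub_comm]
  refine (mul_le_mul_of_nonneg_left ((abs_sub _ _).trans (add_le_add hlogN hlogD)) hk).trans_eq ?_
  ring

end Arimoto

/-- Lipschitz continuity of Arimoto's mutual information of order `α ∈ (1, ∞)`
between `S` and the channel output `Y`, in the joint distribution. -/
theorem stmt_8 {S X Y : Type*} [Fintype S] [Fintype X] [Fintype Y] (α : ℝ) (hα : 1 < α)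
    (Q₁ Q₂ : S → X → ℝ) (W : X → Y → ℝ)
    (hQ₁0 : ∀ s x, 0 ≤ Q₁ s x) (hQ₁1 : ∑ s, ∑ x, Q₁ s x = 1)
    (hQ₂0 : ∀ s x, 0 ≤ Q₂ s x) (hQ₂1 : ∑ s, ∑ x, Q₂ s x = 1)
    (hW0 : ∀ x y, 0 ≤ W x y) (hW1 : ∀ x, ∑ y, W x y = 1) :
    |arimotoMI α (fun s y => ∑ x, Q₁ s x * W x y) -
      arimotoMI α (fun s y => ∑ x, Q₂ s x * W x y)| ≤
      (2 * α / (α - 1)) * (Fintype.card S : ℝ) ^ (1 - 1 / α) *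
        ∑ s, ∑ x, |Q₁ s x - Q₂ s x| := by
  have hR0 : ∀ {Q : S → X → ℝ}, (∀ s x, 0 ≤ Q s x) → ∀ s y, 0 ≤ ∑ x, Q s x * W x y :=
    fun hQ s y ↦ sum_nonneg fun x _ ↦ mul_nonneg (hQ s x) (hW0 x y)
  have hR1 : ∀ {Q : S → X → ℝ}, ∑ s, ∑ x, Q s x = 1 → ∑ s, ∑ y, ∑ x, Q s x * W x y = 1 :=
    fun hQ ↦ by simp_rw [sum_sum_mul_stochastic hW1, hQ]
  refine (abs_arimotoMI_sub_le hα (hR0 hQ₁0) (hR1 hQ₁1) (hR0 hQ₂0) (hR1 hQ₂1)).trans ?_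
  have hconst : 0 ≤ 2 * α / (α - 1) * (Fintype.card S : ℝ) ^ (1 - 1 / α) :=
    mul_nonneg (div_nonneg (by linarith) (by linarith)) (Real.rpow_nonneg (Nat.cast_nonneg _) _)
  refine mul_le_mul_of_nonneg_left (sum_le_sum fun s _ ↦ ?_) hconst
  simpa only [← sum_sub_distrib, ← sub_mul] using
    sum_abs_sum_mul_stochastic_le hW0 hW1 fun x ↦ Q₁ s x - Q₂ s x
end

section
/- Let α ∈ (1,∞), Q_1, Q_2 joint distributions on finite S × X with m_S := min over i,s of the S-marginal of Q_i positive, and W a channel from X to finite Y. Then Sibson's mutual information of order α satisfies |I_α^S(P_{S_1,Y_1}) − I_α^S(P_{S_2,Y_2})| ≤ ((2α+1)/(α−1)) · ‖Q_1 − Q_2‖_1 / m_S^{1−1/α}. -/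
open Finset Real NNReal

section Aux

variable {ι : Type*} [Fintype ι]

/-- `ℓ_α` norm of a finite vector. -/
noncomputable def lpN (α : ℝ) (f : ι → ℝ) : ℝ := (∑ i, |f i| ^ α) ^ (1 / α)

lemma lpN_nonneg (α : ℝ) (f : ι → ℝ) : 0 ≤ lpN α f :=
  Real.rpow_nonneg (Finset.sum_nonneg fun i _ => Real.rpow_nonneg (abs_nonneg _) _) _

lemma lpN_add_le (α : ℝ) (hα : 1 ≤ α) (f g : ι → ℝ) :
    lpN α (f + g) ≤ lpN α f + lpN α g := by
  simpa [lpN] using Real.Lp_add_le Finset.univ f g hα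

lemma lpN_sub_comm (α : ℝ) (f g : ι → ℝ) : lpN α (f - g) = lpN α (g - f) := by
  unfold lpN
  congr 1
  exact Finset.sum_congr rfl fun i _ => by rw [Pi.sub_apply, Pi.sub_apply, abs_sub_comm]

lemma abs_lpN_sub (α : ℝ) (hα : 1 ≤ α) (f g : ι → ℝ) :
    |lpN α f - lpN α g| ≤ lpN α (f - g) := by
  rw [abs_sub_le_iff]
  constructor
  · have h := lpN_add_le α hα (f - g) g
    simpa using h
  · have h := lpN_add_le α hα (g - f) f
    rw [lpN_sub_comm α f g]
    simpa using h

lemma real_add_rpow {p : ℝ} (hp : 1 ≤ p) {a b : ℝ} (ha : 0 ≤ a) (hb : 0 ≤ b) :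
    a ^ p + b ^ p ≤ (a + b) ^ p := by
  have h := NNReal.coe_le_coe.2 (NNReal.add_rpow_le_rpow_add (⟨a, ha⟩ : ℝ≥0) ⟨b, hb⟩ hp)
  push_cast at h
  exact h

lemma sum_rpow_le_rpow_sum {ι' : Type*} (α : ℝ) (hα : 1 ≤ α) (s : Finset ι') (f : ι' → ℝ)
    (hf : ∀ i ∈ s, 0 ≤ f i) : ∑ i ∈ s, f i ^ α ≤ (∑ i ∈ s, f i) ^ α := by
  induction s using Finset.cons_induction with
  | empty => simp [Real.zero_rpow (by linarith : α ≠ 0)]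
  | cons a s ha ih =>
    rw [Finset.sum_cons, Finset.sum_cons]
    have h1 := ih fun i hi => hf i (Finset.mem_cons_of_mem hi)
    have h2 : f a ^ α + (∑ i ∈ s, f i) ^ α ≤ (f a + ∑ i ∈ s, f i) ^ α :=
      real_add_rpow hα (hf a (Finset.mem_cons_self a s))
        (Finset.sum_nonneg fun i hi => hf i (Finset.mem_cons_of_mem hi))
    linarith

lemma lpN_le_sum (α : ℝ) (hα : 1 ≤ α) (f : ι → ℝ) : lpN α f ≤ ∑ i, |f i| := by
  have hα0 : (0 : ℝ) < α := lt_of_lt_of_le one_pos hα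
  have h := sum_rpow_le_rpow_sum α hα Finset.univ (fun i => |f i|) fun i _ => abs_nonneg _
  have h2 : lpN α f ≤ ((∑ i, |f i|) ^ α) ^ (1 / α) :=
    Real.rpow_le_rpow
      (Finset.sum_nonneg fun i _ => Real.rpow_nonneg (abs_nonneg _) _) h (by positivity)
  rwa [one_div, Real.rpow_rpow_inv (Finset.sum_nonneg fun i _ => abs_nonneg _) hα0.ne'] at h2

lemma lpN_sum_le {Y : Type*} (α : ℝ) (hα : 1 ≤ α) (s : Finset Y) (v : Y → ι → ℝ) :
    lpN α (∑ y ∈ s, v y) ≤ ∑ y ∈ s, lpN α (v y) := by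
  have hα0 : (0 : ℝ) < α := lt_of_lt_of_le one_pos hα
  induction s using Finset.cons_induction with
  | empty =>
    simp [lpN, Real.zero_rpow hα0.ne', Real.zero_rpow (inv_ne_zero hα0.ne'), one_div]
  | cons a s ha ih =>
    rw [Finset.sum_cons, Finset.sum_cons]
    exact le_trans (lpN_add_le α hα _ _) (by linarith)

lemma rpow_neg_anti {m a β : ℝ} (hm : 0 < m) (ha : m ≤ a) (hβ : 0 ≤ β) :
    a ^ (-β) ≤ m ^ (-β) := by
  rw [Real.rpow_neg (le_trans hm.le ha), Real.rpow_neg hm.le]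
  exact inv_anti₀ (Real.rpow_pos_of_pos hm β) (Real.rpow_le_rpow hm.le ha hβ)

lemma keyB {β a b m : ℝ} (hβ0 : 0 ≤ β) (hβ1 : β ≤ 1) (hm : 0 < m) (ha : m ≤ a) (hb : m ≤ b) :
    |a ^ (-β) - b ^ (-β)| * b ≤ m ^ (-β) * |a - b| := by
  have ha0 : 0 < a := lt_of_lt_of_le hm ha
  have hb0 : 0 < b := lt_of_lt_of_le hm hb
  have hA : 0 < a ^ β := Real.rpow_pos_of_pos ha0 β
  have hB : 0 < b ^ β := Real.rpow_pos_of_pos hb0 β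
  have hM : 0 < m ^ β := Real.rpow_pos_of_pos hm β
  have hMA : m ^ β ≤ a ^ β := Real.rpow_le_rpow hm.le ha hβ0
  have hMB : m ^ β ≤ b ^ β := Real.rpow_le_rpow hm.le hb hβ0
  rw [Real.rpow_neg ha0.le, Real.rpow_neg hb0.le, Real.rpow_neg hm.le]
  rcases le_total a b with hab | hab
  · -- a ≤ b; key: a * b^β ≤ b * a^β
    have hAB : a ^ β ≤ b ^ β := Real.rpow_le_rpow ha0.le hab hβ0
    have key : a * b ^ β ≤ b * a ^ β := by
      have h1 : a ^ (1 - β) ≤ b ^ (1 - β) := Real.rpow_le_rpow ha0.le hab (by linarith)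
      have h2 : a ^ (1 - β) * a ^ β = a := by
        rw [← Real.rpow_add ha0]; norm_num
      have h3 : b ^ (1 - β) * b ^ β = b := by
        rw [← Real.rpow_add hb0]; norm_num
      calc a * b ^ β = a ^ (1 - β) * a ^ β * b ^ β := by rw [h2]
        _ ≤ b ^ (1 - β) * a ^ β * b ^ β := by
            have := mul_le_mul_of_nonneg_right
              (mul_le_mul_of_nonneg_right h1 hA.le) hB.le
            exact this
        _ = b * a ^ β := by rw [mul_right_comm, h3]
    have h5 : (a ^ β)⁻¹ - (b ^ β)⁻¹ = (b ^ β - a ^ β) / (a ^ β * b ^ β) := by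
      field_simp
    rw [abs_of_nonneg (sub_nonneg.2 (inv_anti₀ hA hAB)), abs_sub_comm a b,
      abs_of_nonneg (by linarith : (0:ℝ) ≤ b - a), h5]
    rw [div_mul_eq_mul_div, div_le_iff₀ (by positivity)]
    -- (b^β - a^β) * b ≤ (m^β)⁻¹ * (b-a) * (a^β * b^β)
    have hstep : (b ^ β - a ^ β) * b ≤ b ^ β * (b - a) := by nlinarith [key]
    have hstep2 : b ^ β * (b - a) ≤ (m ^ β)⁻¹ * (b - a) * (a ^ β * b ^ β) := by
      have h6 : (1:ℝ) ≤ (m ^ β)⁻¹ * a ^ β := by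
        rw [← div_eq_inv_mul, le_div_iff₀ hM]; linarith
      nlinarith [mul_nonneg (sub_nonneg.2 hab) hB.le]
    linarith
  · -- b ≤ a; key: b * a^β ≤ a * b^β
    have hAB : b ^ β ≤ a ^ β := Real.rpow_le_rpow hb0.le hab hβ0
    have key : b * a ^ β ≤ a * b ^ β := by
      have h1 : b ^ (1 - β) ≤ a ^ (1 - β) := Real.rpow_le_rpow hb0.le hab (by linarith)
      have h2 : a ^ (1 - β) * a ^ β = a := by
        rw [← Real.rpow_add ha0]; norm_num
      have h3 : b ^ (1 - β) * b ^ β = b := by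
        rw [← Real.rpow_add hb0]; norm_num
      calc b * a ^ β = b ^ (1 - β) * b ^ β * a ^ β := by rw [h3]
        _ ≤ a ^ (1 - β) * b ^ β * a ^ β := by
            have := mul_le_mul_of_nonneg_right
              (mul_le_mul_of_nonneg_right h1 hB.le) hA.le
            exact this
        _ = a * b ^ β := by rw [mul_right_comm, h2]
    have h5 : (b ^ β)⁻¹ - (a ^ β)⁻¹ = (a ^ β - b ^ β) / (a ^ β * b ^ β) := by
      rw [inv_eq_one_div, inv_eq_one_div, div_sub_div _ _ hB.ne' hA.ne', one_mul, mul_one,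
        mul_comm (b ^ β) (a ^ β)]
    rw [abs_sub_comm, abs_of_nonneg (sub_nonneg.2 (inv_anti₀ hB hAB)),
      abs_of_nonneg (by linarith : (0:ℝ) ≤ a - b), h5]
    rw [div_mul_eq_mul_div, div_le_iff₀ (by positivity)]
    have hstep : (a ^ β - b ^ β) * b ≤ b ^ β * (a - b) := by nlinarith [key]
    have hstep2 : b ^ β * (a - b) ≤ (m ^ β)⁻¹ * (a - b) * (a ^ β * b ^ β) := by
      have h6 : (1:ℝ) ≤ (m ^ β)⁻¹ * a ^ β := by
        rw [← div_eq_inv_mul, le_div_iff₀ hM]; linarith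
      nlinarith [mul_nonneg (sub_nonneg.2 hab) hB.le]
    linarith

lemma log_sub_le {a b : ℝ} (ha : 1 ≤ a) (hab : a ≤ b) :
    Real.log b - Real.log a ≤ b - a := by
  have ha0 : (0:ℝ) < a := by linarith
  have hb0 : (0:ℝ) < b := by linarith
  rw [← Real.log_div hb0.ne' ha0.ne']
  have h1 := Real.log_le_sub_one_of_pos (div_pos hb0 ha0)
  have h2 : b / a - 1 ≤ b - a := by
    rw [div_sub_one ha0.ne']
    calc (b - a) / a ≤ (b - a) / 1 := by
          apply div_le_div_of_nonneg_left (by linarith) one_pos ha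
        _ = b - a := by rw [div_one]
  linarith

end Aux

/-- Sibson's mutual information of order `α` between `S` (with distribution `PS`)
and `Y` (with conditional distribution `K y|s`). -/
noncomputable def sibsonMI {S Y : Type*} [Fintype S] [Fintype Y] (α : ℝ)
    (PS : S → ℝ) (K : S → Y → ℝ) : ℝ :=
  (α / (α - 1)) * Real.log (∑ y, (∑ s, (PS s ^ (1 / α) * K s y) ^ α) ^ (1 / α))

/-- Local Lipschitz continuity of Sibson's mutual information of order `α ∈ (1, ∞)`
between `S` and the channel output `Y`, in the joint distribution, where `mS > 0`
is a lower bound on the `S`-marginals of `Q₁` and `Q₂`. -/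
theorem stmt_11 {S X Y : Type*} [Fintype S] [Fintype X] [Fintype Y] (α : ℝ) (hα : 1 < α)
    (Q₁ Q₂ : S → X → ℝ) (W : X → Y → ℝ) (mS : ℝ)
    (hQ₁0 : ∀ s x, 0 ≤ Q₁ s x) (hQ₁1 : ∑ s, ∑ x, Q₁ s x = 1)
    (hQ₂0 : ∀ s x, 0 ≤ Q₂ s x) (hQ₂1 : ∑ s, ∑ x, Q₂ s x = 1)
    (hW0 : ∀ x y, 0 ≤ W x y) (hW1 : ∀ x, ∑ y, W x y = 1)
    (hmS : 0 < mS)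
    (hm₁ : ∀ s, mS ≤ ∑ x, Q₁ s x) (hm₂ : ∀ s, mS ≤ ∑ x, Q₂ s x) :
    |sibsonMI α (fun s => ∑ x, Q₁ s x)
        (fun s y => (∑ x, Q₁ s x * W x y) / (∑ x, Q₁ s x)) -
     sibsonMI α (fun s => ∑ x, Q₂ s x)
        (fun s y => (∑ x, Q₂ s x * W x y) / (∑ x, Q₂ s x))| ≤
      ((2 * α + 1) / (α - 1)) * (∑ s, ∑ x, |Q₁ s x - Q₂ s x|) / mS ^ (1 - 1 / α) := by
  have hα0 : (0:ℝ) < α := by linarith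
  have hα1 : (1:ℝ) ≤ α := hα.le
  have hαne : α ≠ 0 := ne_of_gt hα0
  have hα1' : (0:ℝ) < α - 1 := by linarith
  set β : ℝ := 1 - 1 / α with hβdef
  have hβ0 : 0 ≤ β := by
    have h : 1 / α ≤ 1 := by rw [div_le_one hα0]; linarith
    simp only [hβdef]; linarith
  have hβ1 : β ≤ 1 := by
    have h : 0 < 1 / α := by positivity
    simp only [hβdef]; linarith
  set P₁ : S → ℝ := fun s => ∑ x, Q₁ s x with hP₁def
  set P₂ : S → ℝ := fun s => ∑ x, Q₂ s x with hP₂def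
  have hP₁pos : ∀ s, 0 < P₁ s := fun s => lt_of_lt_of_le hmS (hm₁ s)
  have hP₂pos : ∀ s, 0 < P₂ s := fun s => lt_of_lt_of_le hmS (hm₂ s)
  set J₁ : S → Y → ℝ := fun s y => ∑ x, Q₁ s x * W x y with hJ₁def
  set J₂ : S → Y → ℝ := fun s y => ∑ x, Q₂ s x * W x y with hJ₂def
  have hJ₁0 : ∀ s y, 0 ≤ J₁ s y := fun s y =>
    Finset.sum_nonneg fun x _ => mul_nonneg (hQ₁0 s x) (hW0 x y)
  have hJ₂0 : ∀ s y, 0 ≤ J₂ s y := fun s y =>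
    Finset.sum_nonneg fun x _ => mul_nonneg (hQ₂0 s x) (hW0 x y)
  have hJ₁sum : ∀ s, ∑ y, J₁ s y = P₁ s := by
    intro s
    simp only [hJ₁def, hP₁def]
    rw [Finset.sum_comm]
    simp [← Finset.mul_sum, hW1]
  have hJ₂sum : ∀ s, ∑ y, J₂ s y = P₂ s := by
    intro s
    simp only [hJ₂def, hP₂def]
    rw [Finset.sum_comm]
    simp [← Finset.mul_sum, hW1]
  set u₁ : Y → S → ℝ := fun y s => P₁ s ^ (-β) * J₁ s y with hu₁def
  set u₂ : Y → S → ℝ := fun y s => P₂ s ^ (-β) * J₂ s y with hu₂def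
  set F₁ : ℝ := ∑ y, lpN α (u₁ y) with hF₁def
  set F₂ : ℝ := ∑ y, lpN α (u₂ y) with hF₂def
  -- rewrite sibsonMI in terms of F
  have hbase : ∀ (P : S → ℝ) (J : S → Y → ℝ), (∀ s, 0 < P s) → ∀ s y,
      P s ^ (1 / α) * (J s y / P s) = P s ^ (-β) * J s y := by
    intro P J hP s y
    rw [show (-β : ℝ) = 1 / α - 1 by simp only [hβdef]; ring,
      Real.rpow_sub (hP s), Real.rpow_one]
    ring
  have hs₁ : sibsonMI α P₁ (fun s y => (∑ x, Q₁ s x * W x y) / ∑ x, Q₁ s x)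
      = (α / (α - 1)) * Real.log F₁ := by
    show sibsonMI α P₁ (fun s y => J₁ s y / P₁ s) = _
    unfold sibsonMI
    congr 2
    simp only [hF₁def, lpN]
    refine Finset.sum_congr rfl fun y _ => ?_
    congr 1
    refine Finset.sum_congr rfl fun s _ => ?_
    rw [hbase P₁ J₁ hP₁pos s y, hu₁def]
    rw [abs_of_nonneg (mul_nonneg (Real.rpow_nonneg (hP₁pos s).le _) (hJ₁0 s y))]
  have hs₂ : sibsonMI α P₂ (fun s y => (∑ x, Q₂ s x * W x y) / ∑ x, Q₂ s x)
      = (α / (α - 1)) * Real.log F₂ := by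
    show sibsonMI α P₂ (fun s y => J₂ s y / P₂ s) = _
    unfold sibsonMI
    congr 2
    simp only [hF₂def, lpN]
    refine Finset.sum_congr rfl fun y _ => ?_
    congr 1
    refine Finset.sum_congr rfl fun s _ => ?_
    rw [hbase P₂ J₂ hP₂pos s y, hu₂def]
    rw [abs_of_nonneg (mul_nonneg (Real.rpow_nonneg (hP₂pos s).le _) (hJ₂0 s y))]
  -- lower bound F ≥ 1
  have hFone : ∀ (P : S → ℝ) (J : S → Y → ℝ) (u : Y → S → ℝ), (∀ s, 0 < P s) →
      (∀ s, ∑ y, J s y = P s) → (u = fun y s => P s ^ (-β) * J s y) →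
      (∑ s, P s = 1) → 1 ≤ ∑ y, lpN α (u y) := by
    intro P J u hP hJs hu hPsum
    have hsum : (∑ y, u y) = fun s => P s ^ (1 / α) := by
      funext s
      rw [Finset.sum_apply]
      simp only [hu]
      rw [← Finset.mul_sum, hJs s, ← Real.rpow_add_one (hP s).ne']
      congr 1
      simp only [hβdef]; ring
    have h1 : lpN α (∑ y, u y) = 1 := by
      rw [hsum]
      unfold lpN
      have habs : ∀ s : S, |P s ^ (1 / α)| ^ α = P s := by
        intro s
        rw [abs_of_nonneg (Real.rpow_nonneg (hP s).le _), ← Real.rpow_mul (hP s).le,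
          one_div_mul_cancel hαne, Real.rpow_one]
      simp only [habs]
      rw [hPsum]
      exact Real.one_rpow _
    calc (1:ℝ) = lpN α (∑ y, u y) := h1.symm
      _ ≤ ∑ y, lpN α (u y) := lpN_sum_le α hα1 Finset.univ u
  have hF₁1 : 1 ≤ F₁ := hFone P₁ J₁ u₁ hP₁pos hJ₁sum hu₁def hQ₁1
  have hF₂1 : 1 ≤ F₂ := hFone P₂ J₂ u₂ hP₂pos hJ₂sum hu₂def hQ₂1
  set δ : ℝ := ∑ s, ∑ x, |Q₁ s x - Q₂ s x| with hδdef
  have hδ0 : 0 ≤ δ := Finset.sum_nonneg fun s _ => Finset.sum_nonneg fun x _ => abs_nonneg _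
  have hJd : ∀ s, ∑ y, |J₁ s y - J₂ s y| ≤ ∑ x, |Q₁ s x - Q₂ s x| := by
    intro s
    have h1 : ∀ y : Y, |J₁ s y - J₂ s y| ≤ ∑ x, |Q₁ s x - Q₂ s x| * W x y := by
      intro y
      have he : J₁ s y - J₂ s y = ∑ x, (Q₁ s x - Q₂ s x) * W x y := by
        simp only [hJ₁def, hJ₂def]
        rw [← Finset.sum_sub_distrib]
        exact Finset.sum_congr rfl fun x _ => by ring
      rw [he]
      refine (Finset.abs_sum_le_sum_abs _ _).trans ?_
      refine Finset.sum_le_sum fun x _ => ?_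
      rw [abs_mul, abs_of_nonneg (hW0 x y)]
    calc ∑ y, |J₁ s y - J₂ s y| ≤ ∑ y, ∑ x, |Q₁ s x - Q₂ s x| * W x y :=
          Finset.sum_le_sum fun y _ => h1 y
      _ = ∑ x, |Q₁ s x - Q₂ s x| := by
          rw [Finset.sum_comm]
          simp [← Finset.mul_sum, hW1]
  have hPd : ∀ s, |P₁ s - P₂ s| ≤ ∑ x, |Q₁ s x - Q₂ s x| := by
    intro s
    simp only [hP₁def, hP₂def]
    rw [← Finset.sum_sub_distrib]
    exact Finset.abs_sum_le_sum_abs _ _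
  have hpers : ∀ s, ∑ y, |u₁ y s - u₂ y s| ≤ 2 * mS ^ (-β) * ∑ x, |Q₁ s x - Q₂ s x| := by
    intro s
    have hsplit : ∀ y : Y, |u₁ y s - u₂ y s| ≤
        mS ^ (-β) * |J₁ s y - J₂ s y| + |P₁ s ^ (-β) - P₂ s ^ (-β)| * J₂ s y := by
      intro y
      have he : u₁ y s - u₂ y s =
          P₁ s ^ (-β) * (J₁ s y - J₂ s y) + (P₁ s ^ (-β) - P₂ s ^ (-β)) * J₂ s y := by
        simp only [hu₁def, hu₂def]; ring
      rw [he]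
      refine (abs_add_le _ _).trans (add_le_add ?_ ?_)
      · rw [abs_mul]
        refine mul_le_mul_of_nonneg_right ?_ (abs_nonneg _)
        rw [abs_of_nonneg (Real.rpow_nonneg (hP₁pos s).le _)]
        exact rpow_neg_anti hmS (hm₁ s) hβ0
      · rw [abs_mul, abs_of_nonneg (hJ₂0 s y)]
    calc ∑ y, |u₁ y s - u₂ y s|
        ≤ ∑ y, (mS ^ (-β) * |J₁ s y - J₂ s y| + |P₁ s ^ (-β) - P₂ s ^ (-β)| * J₂ s y) :=
          Finset.sum_le_sum fun y _ => hsplit y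
      _ = mS ^ (-β) * (∑ y, |J₁ s y - J₂ s y|) + |P₁ s ^ (-β) - P₂ s ^ (-β)| * P₂ s := by
          rw [Finset.sum_add_distrib, ← Finset.mul_sum, ← Finset.mul_sum, hJ₂sum s]
      _ ≤ mS ^ (-β) * (∑ x, |Q₁ s x - Q₂ s x|) + mS ^ (-β) * |P₁ s - P₂ s| := by
          refine add_le_add (mul_le_mul_of_nonneg_left (hJd s) (Real.rpow_nonneg hmS.le _)) ?_
          exact keyB hβ0 hβ1 hmS (hm₁ s) (hm₂ s)
      _ ≤ 2 * mS ^ (-β) * ∑ x, |Q₁ s x - Q₂ s x| := by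
          have h2 := mul_le_mul_of_nonneg_left (hPd s) (Real.rpow_nonneg hmS.le (-β))
          linarith
  have hFdiff : |F₁ - F₂| ≤ 2 * mS ^ (-β) * δ := by
    calc |F₁ - F₂| = |∑ y, (lpN α (u₁ y) - lpN α (u₂ y))| := by
          rw [Finset.sum_sub_distrib]
      _ ≤ ∑ y, |lpN α (u₁ y) - lpN α (u₂ y)| := Finset.abs_sum_le_sum_abs _ _
      _ ≤ ∑ y, lpN α (u₁ y - u₂ y) := Finset.sum_le_sum fun y _ => abs_lpN_sub α hα1 _ _
      _ ≤ ∑ y, ∑ s, |u₁ y s - u₂ y s| := by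
          refine Finset.sum_le_sum fun y _ => ?_
          simpa using lpN_le_sum α hα1 (u₁ y - u₂ y)
      _ = ∑ s, ∑ y, |u₁ y s - u₂ y s| := Finset.sum_comm
      _ ≤ ∑ s, 2 * mS ^ (-β) * ∑ x, |Q₁ s x - Q₂ s x| :=
          Finset.sum_le_sum fun s _ => hpers s
      _ = 2 * mS ^ (-β) * δ := by rw [hδdef, Finset.mul_sum]
  have hlog : |Real.log F₁ - Real.log F₂| ≤ |F₁ - F₂| := by
    rcases le_total F₁ F₂ with h | h
    · rw [abs_sub_comm, abs_of_nonneg (sub_nonneg.2 (Real.log_le_log (by linarith) h)),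
        abs_sub_comm F₁ F₂, abs_of_nonneg (by linarith : (0:ℝ) ≤ F₂ - F₁)]
      exact log_sub_le hF₁1 h
    · rw [abs_of_nonneg (sub_nonneg.2 (Real.log_le_log (by linarith) h)),
        abs_of_nonneg (by linarith : (0:ℝ) ≤ F₁ - F₂)]
      exact log_sub_le hF₂1 h
  rw [hs₁, hs₂, ← mul_sub, abs_mul, abs_of_pos (div_pos hα0 hα1')]
  have hMβ : 0 < mS ^ β := Real.rpow_pos_of_pos hmS β
  have hfinal : α / (α - 1) * (2 * mS ^ (-β) * δ) = 2 * α / (α - 1) * δ / mS ^ β := by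
    rw [Real.rpow_neg hmS.le]
    field_simp
  calc α / (α - 1) * |Real.log F₁ - Real.log F₂|
      ≤ α / (α - 1) * (2 * mS ^ (-β) * δ) :=
        mul_le_mul_of_nonneg_left (hlog.trans hFdiff) (le_of_lt (div_pos hα0 hα1'))
    _ = 2 * α / (α - 1) * δ / mS ^ β := hfinal
    _ ≤ (2 * α + 1) / (α - 1) * δ / mS ^ β := by
        have h1 : 2 * α / (α - 1) ≤ (2 * α + 1) / (α - 1) :=
          (div_le_div_iff_of_pos_right hα1').2 (by linarith)
        exact (div_le_div_iff_of_pos_right hMβ).2 (mul_le_mul_of_nonneg_right h1 hδ0)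
end

section
/- Let Q_1, Q_2 be joint distributions on finite S × X with min_s Σ_x Q_1(s,x) > 0 and min_s Σ_x Q_2(s,x) > 0, and W a channel from X to finite Y. Then Sibson's mutual information of order ∞ satisfies |I_∞^S(P_{S_1,Y_1}) − I_∞^S(P_{S_2,Y_2})| ≤ 2 ‖Q_1 − Q_2‖_1 / min_s Σ_x Q_1(s,x), where I_∞^S(P_{U,V}) = log Σ_v max_u P_{V|U}(v|u). -/
/-!
Write `T(Q) = ∑_y max_s P_{Y|S}(y|s) = exp I_∞^S`. Every `T(Q) ≥ 1`, and `log` is `1`-Lipschitz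
on `[1, ∞)`, so it suffices to bound `|T(Q₁) - T(Q₂)|`. Replacing each maximum over `s` by the sum
over `s` of the differences, this is at most `∑_s ‖P_{Y₁|S₁=s} - P_{Y₂|S₂=s}‖₁`. For a fixed `s`,
comparing `R₁/q₁` with `R₂/q₂` (unnormalised row and its mass) costs `‖R₁ - R₂‖₁/q₁` for the rows
and `|q₁ - q₂|/q₁` for the normalisation, and both are at most `‖Q₁(s,·) - Q₂(s,·)‖₁/q₁` because
the channel `W` does not increase the `ℓ¹` distance.
-/

open Finset Real

theorem Real.log_sub_log_le_abs_sub {a b : ℝ} (ha : 0 < a) (hb : 1 ≤ b) :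
    log a - log b ≤ |a - b| := by
  have hb0 : 0 < b := one_pos.trans_le hb
  calc log a - log b = log (a / b) := (log_div ha.ne' hb0.ne').symm
    _ ≤ a / b - 1 := log_le_sub_one_of_pos (div_pos ha hb0)
    _ = (a - b) / b := by rw [sub_div, div_self hb0.ne']
    _ ≤ |a - b| / b := by gcongr; exact le_abs_self _
    _ ≤ |a - b| := div_le_self (abs_nonneg _) hb

theorem Real.abs_log_sub_log_le_abs_sub {a b : ℝ} (ha : 1 ≤ a) (hb : 1 ≤ b) :
    |log a - log b| ≤ |a - b| :=
  abs_sub_le_iff.2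
    ⟨log_sub_log_le_abs_sub (one_pos.trans_le ha) hb,
      abs_sub_comm a b ▸ log_sub_log_le_abs_sub (one_pos.trans_le hb) ha⟩

theorem Finset.abs_sup'_sub_sup'_le {ι : Type*} {s : Finset ι} (hs : s.Nonempty) (f g : ι → ℝ) :
    |s.sup' hs f - s.sup' hs g| ≤ s.sup' hs fun i => |f i - g i| := by
  have key : ∀ f g : ι → ℝ, s.sup' hs f ≤ s.sup' hs g + s.sup' hs fun i => |f i - g i| :=
    fun f g => sup'_le _ _ fun i hi =>
      calc f i ≤ g i + |f i - g i| := by linarith [le_abs_self (f i - g i)]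
        _ ≤ _ := add_le_add (le_sup' g hi) (le_sup' (fun i => |f i - g i|) hi)
  refine abs_sub_le_iff.2 ⟨by linarith [key f g], ?_⟩
  simp_rw [abs_sub_comm (f _)]
  linarith [key g f]

theorem Finset.sum_abs_div_sub_div_le {Y : Type*} [Fintype Y] {R₁ R₂ : Y → ℝ} {q₁ q₂ : ℝ}
    (hq₁ : 0 < q₁) (hq₂ : 0 < q₂) (hR₂ : ∀ y, 0 ≤ R₂ y) (hR₂q₂ : ∑ y, R₂ y = q₂) :
    ∑ y, |R₁ y / q₁ - R₂ y / q₂| ≤ (∑ y, |R₁ y - R₂ y| + |q₁ - q₂|) / q₁ := by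
  have hterm : ∀ y, |R₁ y / q₁ - R₂ y / q₂| ≤
      |R₁ y - R₂ y| / q₁ + R₂ y * |q₁ - q₂| / (q₁ * q₂) := by
    intro y
    have hsplit : R₁ y / q₁ - R₂ y / q₂ = (R₁ y - R₂ y) / q₁ + R₂ y * (q₂ - q₁) / (q₁ * q₂) := by
      field_simp
      ring
    rw [hsplit, abs_sub_comm q₁ q₂]
    refine (abs_add_le _ _).trans_eq ?_
    rw [abs_div, abs_div, abs_mul, abs_of_pos hq₁, abs_of_pos (mul_pos hq₁ hq₂),
      abs_of_nonneg (hR₂ y)]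
  calc ∑ y, |R₁ y / q₁ - R₂ y / q₂|
      ≤ ∑ y, (|R₁ y - R₂ y| / q₁ + R₂ y * |q₁ - q₂| / (q₁ * q₂)) := sum_le_sum fun y _ => hterm y
    _ = (∑ y, |R₁ y - R₂ y|) / q₁ + q₂ * |q₁ - q₂| / (q₁ * q₂) := by
      rw [sum_add_distrib, ← sum_div, ← sum_div, ← sum_mul, hR₂q₂]
    _ = (∑ y, |R₁ y - R₂ y| + |q₁ - q₂|) / q₁ := by
      field_simp

section Channel

variable {X Y : Type*} [Fintype X] [Fintype Y] {W : X → Y → ℝ}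

theorem sum_sum_mul_of_sum_eq_one (hW1 : ∀ x, ∑ y, W x y = 1) (a : X → ℝ) :
    ∑ y, ∑ x, a x * W x y = ∑ x, a x := by
  rw [sum_comm]
  simp_rw [← mul_sum, hW1, mul_one]

theorem sum_abs_sum_mul_le (hW0 : ∀ x y, 0 ≤ W x y) (hW1 : ∀ x, ∑ y, W x y = 1) (a : X → ℝ) :
    ∑ y, |∑ x, a x * W x y| ≤ ∑ x, |a x| :=
  calc ∑ y, |∑ x, a x * W x y| ≤ ∑ y, ∑ x, |a x| * W x y :=
        sum_le_sum fun y _ => (abs_sum_le_sum_abs _ _).trans_eq <|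
          sum_congr rfl fun x _ => by rw [abs_mul, abs_of_nonneg (hW0 x y)]
    _ = ∑ x, |a x| := sum_sum_mul_of_sum_eq_one hW1 _

theorem sum_abs_condDistrib_sub_le (hW0 : ∀ x y, 0 ≤ W x y) (hW1 : ∀ x, ∑ y, W x y = 1)
    {a b : X → ℝ} (hb : ∀ x, 0 ≤ b x) (ha1 : 0 < ∑ x, a x) (hb1 : 0 < ∑ x, b x) :
    ∑ y, |(∑ x, a x * W x y) / ∑ x, a x - (∑ x, b x * W x y) / ∑ x, b x| ≤
      2 * (∑ x, |a x - b x|) / ∑ x, a x := by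
  have hrows : ∑ y, |∑ x, a x * W x y - ∑ x, b x * W x y| ≤ ∑ x, |a x - b x| := by
    simpa only [← sum_sub_distrib, sub_mul] using sum_abs_sum_mul_le hW0 hW1 fun x => a x - b x
  have hmass : |∑ x, a x - ∑ x, b x| ≤ ∑ x, |a x - b x| := by
    simpa only [← sum_sub_distrib] using abs_sum_le_sum_abs (fun x => a x - b x) univ
  calc _ ≤ (∑ y, |∑ x, a x * W x y - ∑ x, b x * W x y| + |∑ x, a x - ∑ x, b x|) / ∑ x, a x :=
        sum_abs_div_sub_div_le ha1 hb1
          (fun y => sum_nonneg fun x _ => mul_nonneg (hb x) (hW0 x y))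
          (sum_sum_mul_of_sum_eq_one hW1 b)
    _ ≤ 2 * (∑ x, |a x - b x|) / ∑ x, a x := by
      gcongr
      linarith

end Channel

section Sibson

variable {S X Y : Type*} [Fintype S] [Fintype X] [Fintype Y] [Nonempty S]

/-- `exp I_∞^S(P_{S,Y})` for `P_{S,Y}(s,y) = ∑_x Q(s,x) W(x,y)`. -/
noncomputable def sibsonSum (Q : S → X → ℝ) (W : X → Y → ℝ) : ℝ :=
  ∑ y, univ.sup' univ_nonempty fun s => (∑ x, Q s x * W x y) / ∑ x, Q s x

theorem one_le_sibsonSum {Q : S → X → ℝ} {W : X → Y → ℝ} (hW1 : ∀ x, ∑ y, W x y = 1)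
    (hQ : ∀ s, 0 < ∑ x, Q s x) : 1 ≤ sibsonSum Q W := by
  obtain ⟨s⟩ := ‹Nonempty S›
  calc (1 : ℝ) = ∑ y, (∑ x, Q s x * W x y) / ∑ x, Q s x := by
        rw [← sum_div, sum_sum_mul_of_sum_eq_one hW1, div_self (hQ s).ne']
    _ ≤ sibsonSum Q W :=
        sum_le_sum fun y _ => le_sup' (fun s => (∑ x, Q s x * W x y) / ∑ x, Q s x) (mem_univ s)

theorem abs_sibsonSum_sub_le {Q₁ Q₂ : S → X → ℝ} {W : X → Y → ℝ} (hQ₂ : ∀ s x, 0 ≤ Q₂ s x)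
    (hW0 : ∀ x y, 0 ≤ W x y) (hW1 : ∀ x, ∑ y, W x y = 1)
    (hm₁ : ∀ s, 0 < ∑ x, Q₁ s x) (hm₂ : ∀ s, 0 < ∑ x, Q₂ s x) :
    |sibsonSum Q₁ W - sibsonSum Q₂ W| ≤
      ∑ s, 2 * (∑ x, |Q₁ s x - Q₂ s x|) / ∑ x, Q₁ s x := by
  set P : (S → X → ℝ) → S → Y → ℝ := fun Q s y => (∑ x, Q s x * W x y) / ∑ x, Q s x
  calc |sibsonSum Q₁ W - sibsonSum Q₂ W|
      ≤ ∑ y, |univ.sup' univ_nonempty (P Q₁ · y) - univ.sup' univ_nonempty (P Q₂ · y)| := by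
        rw [sibsonSum, sibsonSum, ← sum_sub_distrib]
        exact abs_sum_le_sum_abs _ _
    _ ≤ ∑ y, ∑ s, |P Q₁ s y - P Q₂ s y| := sum_le_sum fun y _ =>
        (abs_sup'_sub_sup'_le _ _ _).trans <| sup'_le _ _ fun s _ =>
          single_le_sum (f := fun s => |P Q₁ s y - P Q₂ s y|) (fun _ _ => abs_nonneg _) (mem_univ s)
    _ = ∑ s, ∑ y, |P Q₁ s y - P Q₂ s y| := sum_comm
    _ ≤ _ := sum_le_sum fun s _ =>
        sum_abs_condDistrib_sub_le hW0 hW1 (hQ₂ s) (hm₁ s) (hm₂ s)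

end Sibson

theorem stmt_12_general {S X Y : Type*} [Fintype S] [Fintype X] [Fintype Y] [Nonempty S]
    (Q₁ Q₂ : S → X → ℝ) (W : X → Y → ℝ)
    (hQ₂0 : ∀ s x, 0 ≤ Q₂ s x)
    (hW0 : ∀ x y, 0 ≤ W x y) (hW1 : ∀ x, ∑ y, W x y = 1)
    (hm₁ : ∀ s, 0 < ∑ x, Q₁ s x) (hm₂ : ∀ s, 0 < ∑ x, Q₂ s x) :
    |Real.log (∑ y, Finset.univ.sup' Finset.univ_nonempty
        (fun s => (∑ x, Q₁ s x * W x y) / (∑ x, Q₁ s x))) -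
     Real.log (∑ y, Finset.univ.sup' Finset.univ_nonempty
        (fun s => (∑ x, Q₂ s x * W x y) / (∑ x, Q₂ s x)))| ≤
      2 * (∑ s, ∑ x, |Q₁ s x - Q₂ s x|) /
        Finset.univ.inf' Finset.univ_nonempty (fun s => ∑ x, Q₁ s x) := by
  set m := univ.inf' univ_nonempty fun s => ∑ x, Q₁ s x
  have hm : 0 < m := (lt_inf'_iff _).2 fun s _ => hm₁ s
  change |log (sibsonSum Q₁ W) - log (sibsonSum Q₂ W)| ≤ _
  calc |log (sibsonSum Q₁ W) - log (sibsonSum Q₂ W)|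
      ≤ |sibsonSum Q₁ W - sibsonSum Q₂ W| :=
        abs_log_sub_log_le_abs_sub (one_le_sibsonSum hW1 hm₁) (one_le_sibsonSum hW1 hm₂)
    _ ≤ ∑ s, 2 * (∑ x, |Q₁ s x - Q₂ s x|) / ∑ x, Q₁ s x :=
        abs_sibsonSum_sub_le hQ₂0 hW0 hW1 hm₁ hm₂
    _ ≤ ∑ s, 2 * (∑ x, |Q₁ s x - Q₂ s x|) / m := sum_le_sum fun s _ => by
        gcongr
        exact inf'_le _ (mem_univ s)
    _ = 2 * (∑ s, ∑ x, |Q₁ s x - Q₂ s x|) / m := by rw [← sum_div, ← mul_sum]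

/-- Local Lipschitz continuity of Sibson's mutual information of order `∞`
(`I_∞^S(P_{S,Y}) = log ∑_y max_s P_{Y|S}(y|s)`) in the joint distribution. -/
theorem stmt_12 {S X Y : Type*} [Fintype S] [Fintype X] [Fintype Y] [Nonempty S]
    (Q₁ Q₂ : S → X → ℝ) (W : X → Y → ℝ)
    (hQ₁0 : ∀ s x, 0 ≤ Q₁ s x) (hQ₁1 : ∑ s, ∑ x, Q₁ s x = 1)
    (hQ₂0 : ∀ s x, 0 ≤ Q₂ s x) (hQ₂1 : ∑ s, ∑ x, Q₂ s x = 1)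
    (hW0 : ∀ x y, 0 ≤ W x y) (hW1 : ∀ x, ∑ y, W x y = 1)
    (hm₁ : ∀ s, 0 < ∑ x, Q₁ s x) (hm₂ : ∀ s, 0 < ∑ x, Q₂ s x) :
    |Real.log (∑ y, Finset.univ.sup' Finset.univ_nonempty
        (fun s => (∑ x, Q₁ s x * W x y) / (∑ x, Q₁ s x))) -
     Real.log (∑ y, Finset.univ.sup' Finset.univ_nonempty
        (fun s => (∑ x, Q₂ s x * W x y) / (∑ x, Q₂ s x)))| ≤
      2 * (∑ s, ∑ x, |Q₁ s x - Q₂ s x|) /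
        Finset.univ.inf' Finset.univ_nonempty (fun s => ∑ x, Q₁ s x) :=
  stmt_12_general Q₁ Q₂ W hQ₂0 hW0 hW1 hm₁ hm₂
end

section
/- Let α ∈ (1,∞), Q_1, Q_2 joint distributions on finite S × X with min_s Σ_x Q_1(s,x) > 0 and all S-marginals positive, and W a channel from X to finite Y. Define the maximal α-leakage L_α^max(Q_i, W) = sup over probability distributions P̃ on S of I_α^A(P̃ · (P_{X_i|S_i} W)). Then |L_α^max(Q_1, W) − L_α^max(Q_2, W)| ≤ (4α/(α−1)) · |S|^{1−1/α} · ‖Q_1 − Q_2‖_1 / min_s Σ_x Q_1(s,x). -/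
open Finset Real

section Aux

variable {ι : Type*}

lemma aux_sum_rpow_le_rpow_sum {α : ℝ} (hα : 1 ≤ α) (s : Finset ι) (f : ι → ℝ)
    (hf : ∀ i ∈ s, 0 ≤ f i) : ∑ i ∈ s, f i ^ α ≤ (∑ i ∈ s, f i) ^ α := by
  have hα0 : (0:ℝ) < α := lt_of_lt_of_le one_pos hα
  have hs0 : 0 ≤ ∑ i ∈ s, f i := Finset.sum_nonneg hf
  calc ∑ i ∈ s, f i ^ α ≤ ∑ i ∈ s, (∑ j ∈ s, f j) ^ (α - 1) * f i := by
        refine Finset.sum_le_sum fun i hi => ?_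
        rcases eq_or_lt_of_le (hf i hi) with h0 | h0
        · rw [← h0, Real.zero_rpow hα0.ne', mul_zero]
        · have hfi : f i ^ α = f i ^ (α - 1) * f i := by
            rw [show α = (α-1)+1 by ring, Real.rpow_add h0, Real.rpow_one]
            ring_nf
          rw [hfi]
          exact mul_le_mul_of_nonneg_right
            (Real.rpow_le_rpow (le_of_lt h0)
              (Finset.single_le_sum hf hi) (by linarith)) (le_of_lt h0)
    _ = (∑ j ∈ s, f j) ^ (α - 1) * ∑ i ∈ s, f i := by rw [← Finset.mul_sum]
    _ = (∑ i ∈ s, f i) ^ α := by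
        rcases eq_or_lt_of_le hs0 with h0 | h0
        · rw [← h0, Real.zero_rpow hα0.ne', mul_zero]
        · rw [show α = (α-1)+1 by ring, Real.rpow_add h0, Real.rpow_one]
          norm_num

lemma aux_aNorm_le_sum {α : ℝ} (hα : 1 ≤ α) (s : Finset ι) (f : ι → ℝ)
    (hf : ∀ i ∈ s, 0 ≤ f i) : (∑ i ∈ s, f i ^ α) ^ (1/α) ≤ ∑ i ∈ s, f i := by
  have hα0 : (0:ℝ) < α := lt_of_lt_of_le one_pos hα
  have h1 := aux_sum_rpow_le_rpow_sum hα s f hf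
  have h2 : ((∑ i ∈ s, f i) ^ α) ^ (1/α) = ∑ i ∈ s, f i := by
    rw [one_div, Real.rpow_rpow_inv (Finset.sum_nonneg hf) hα0.ne']
  calc (∑ i ∈ s, f i ^ α) ^ (1/α) ≤ ((∑ i ∈ s, f i) ^ α) ^ (1/α) :=
        Real.rpow_le_rpow (Finset.sum_nonneg fun i hi =>
          Real.rpow_nonneg (hf i hi) α) h1 (by positivity)
    _ = ∑ i ∈ s, f i := h2

/-- Minkowski inequality for finite families. -/
lemma aux_minkowski {S : Type*} [Fintype S] {α : ℝ} (hα : 1 ≤ α) (t : Finset ι)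
    (v : ι → S → ℝ) :
    (∑ s : S, |∑ y ∈ t, v y s| ^ α) ^ (1/α) ≤
      ∑ y ∈ t, (∑ s : S, |v y s| ^ α) ^ (1/α) := by
  have hα0 : (0:ℝ) < α := lt_of_lt_of_le one_pos hα
  classical
  induction t using Finset.induction with
  | empty =>
      simp [Real.zero_rpow hα0.ne', one_div, Real.zero_rpow (inv_ne_zero hα0.ne')]
  | @insert a t ha ih =>
      simp only [Finset.sum_insert ha]
      calc (∑ s : S, |v a s + ∑ y ∈ t, v y s| ^ α) ^ (1/α)
          ≤ (∑ s : S, |v a s| ^ α) ^ (1/α)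
            + (∑ s : S, |∑ y ∈ t, v y s| ^ α) ^ (1/α) :=
            Real.Lp_add_le Finset.univ (fun s => v a s) (fun s => ∑ y ∈ t, v y s) hα
        _ ≤ (∑ s : S, |v a s| ^ α) ^ (1/α)
            + ∑ y ∈ t, (∑ s : S, |v y s| ^ α) ^ (1/α) := by linarith


lemma aux_sum_le_card_mul_aNorm {S : Type*} [Fintype S] {α : ℝ} (hα : 1 < α)
    (p : S → ℝ) (hp : ∀ s, 0 ≤ p s) :
    ∑ s : S, p s ≤ (Fintype.card S : ℝ) ^ (1 - 1/α) * (∑ s : S, p s ^ α) ^ (1/α) := by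
  have hα1 : (0:ℝ) < α - 1 := by linarith
  have hpq : Real.HolderConjugate α (α/(α-1)) := Real.HolderConjugate.conjExponent hα
  have h := Real.inner_le_Lp_mul_Lq_of_nonneg (f := p) (g := fun _ => (1:ℝ)) Finset.univ hpq
    (fun s _ => hp s) (fun s _ => zero_le_one)
  simp only [mul_one, Real.one_rpow] at h
  rw [Finset.sum_const, Finset.card_univ, nsmul_eq_mul, mul_one] at h
  have hq : 1 / (α/(α-1)) = 1 - 1/α := by field_simp
  rw [hq, mul_comm] at h
  exact h

lemma aux_abs_log_sub_log_le {a b c : ℝ} (hc : 0 < c) (ha : c ≤ a) (hb : c ≤ b) :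
    |Real.log a - Real.log b| ≤ |a - b| / c := by
  have key : ∀ x y : ℝ, c ≤ x → c ≤ y → Real.log x - Real.log y ≤ |x - y| / c := by
    intro x y hx hy
    have hx0 : 0 < x := lt_of_lt_of_le hc hx
    have hy0 : 0 < y := lt_of_lt_of_le hc hy
    have h1 : Real.log x - Real.log y = Real.log (x/y) :=
      (Real.log_div hx0.ne' hy0.ne').symm
    have h2 : Real.log (x/y) ≤ x/y - 1 := Real.log_le_sub_one_of_pos (by positivity)
    have h3 : x/y - 1 = (x - y)/y := by field_simp
    have h4 : (x - y)/y ≤ |x - y| / c := div_le_div₀ (abs_nonneg _) (le_abs_self _) hc hy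
    linarith
  rw [abs_sub_le_iff]
  refine ⟨key a b ha hb, ?_⟩
  rw [abs_sub_comm]
  exact key b a hb ha

lemma aux_abs_ciSup_sub_ciSup_le {ι : Sort*} [Nonempty ι] {f g : ι → ℝ} {C : ℝ}
    (hf : BddAbove (Set.range f)) (hg : BddAbove (Set.range g))
    (h : ∀ i, |f i - g i| ≤ C) :
    |(⨆ i, f i) - ⨆ i, g i| ≤ C := by
  rw [abs_sub_le_iff]
  constructor
  · have hb : ∀ i, f i ≤ (⨆ i, g i) + C := fun i => by
      have h1 := abs_le.1 (h i)
      have h2 := le_ciSup hg i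
      linarith [h1.2]
    linarith [ciSup_le hb]
  · have hb : ∀ i, g i ≤ (⨆ i, f i) + C := fun i => by
      have h1 := abs_le.1 (h i)
      have h2 := le_ciSup hf i
      linarith [h1.1]
    linarith [ciSup_le hb]

end Aux

/-- Maximal `α`-leakage from `S` to `Y` for a joint distribution `Q` on `S × X` and a
channel `W : X → Y`: the supremum, over all distributions `P̃` on `S`, of Arimoto's
mutual information of `P̃ · (P_{X|S} W)`. -/
noncomputable def maxAlphaLeakage {S X Y : Type*} [Fintype S] [Fintype X] [Fintype Y]
    (α : ℝ) (Q : S → X → ℝ) (W : X → Y → ℝ) : ℝ :=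
  ⨆ p : {p : S → ℝ // (∀ s, 0 ≤ p s) ∧ ∑ s, p s = 1},
    arimotoMI α (fun s y => p.1 s * ∑ x, (Q s x / (∑ x', Q s x')) * W x y)

lemma aux_channel_facts {S Y : Type*} [Fintype S] [Fintype Y] {α : ℝ} (hα : 1 < α)
    (K : S → Y → ℝ) (hK0 : ∀ s y, 0 ≤ K s y) (hK1 : ∀ s, ∑ y, K s y = 1)
    (q : S → ℝ) (hq0 : ∀ s, 0 ≤ q s) (hq1 : ∑ s, q s = 1) :
    arimotoMI α (fun s y => q s * K s y) =
      (α/(α-1)) * Real.log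
        ((∑ y, (∑ s, |q s * K s y| ^ α) ^ (1/α)) / (∑ s, q s ^ α) ^ (1/α)) ∧
    1 ≤ (Fintype.card S : ℝ) ^ (1 - 1/α) * (∑ s, q s ^ α) ^ (1/α) ∧
    (∑ s, q s ^ α) ^ (1/α) ≤ ∑ y, (∑ s, |q s * K s y| ^ α) ^ (1/α) ∧
    ∑ y, (∑ s, |q s * K s y| ^ α) ^ (1/α) ≤ 1 := by
  have hα0 : (0:ℝ) < α := by linarith
  have hrow : ∀ s, ∑ y, q s * K s y = q s := fun s => by
    rw [← Finset.mul_sum, hK1, mul_one]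
  have hnum : ∀ y : Y, (∑ s, (q s * K s y) ^ α) = ∑ s, |q s * K s y| ^ α := fun y =>
    Finset.sum_congr rfl fun s _ => by
      rw [abs_of_nonneg (mul_nonneg (hq0 s) (hK0 s y))]
  refine ⟨?_, ?_, ?_, ?_⟩
  · have hden : (∑ s : S, (∑ y, q s * K s y) ^ α) = ∑ s, q s ^ α :=
      Finset.sum_congr rfl fun s _ => by rw [hrow s]
    simp only [arimotoMI, hnum, hden]
  · have h := aux_sum_le_card_mul_aNorm hα q hq0
    rwa [hq1] at h
  · have h := aux_minkowski (le_of_lt hα) Finset.univ (fun y s => q s * K s y)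
    have eD : (∑ s : S, |∑ y, q s * K s y| ^ α) ^ (1/α) = (∑ s, q s ^ α) ^ (1/α) := by
      congr 1
      exact Finset.sum_congr rfl fun s _ => by rw [hrow s, abs_of_nonneg (hq0 s)]
    rwa [eD] at h
  · calc ∑ y, (∑ s, |q s * K s y| ^ α) ^ (1/α)
        ≤ ∑ y, ∑ s, |q s * K s y| := Finset.sum_le_sum fun y _ =>
          aux_aNorm_le_sum (le_of_lt hα) Finset.univ _ (fun s _ => abs_nonneg _)
      _ = ∑ y, ∑ s, q s * K s y := Finset.sum_congr rfl fun y _ =>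
          Finset.sum_congr rfl fun s _ => abs_of_nonneg (mul_nonneg (hq0 s) (hK0 s y))
      _ = ∑ s, ∑ y, q s * K s y := Finset.sum_comm
      _ = ∑ s, q s := Finset.sum_congr rfl fun s _ => hrow s
      _ = 1 := hq1

lemma aux_leakage_diff {S Y : Type*} [Fintype S] [Fintype Y] [Nonempty S]
    {α : ℝ} (hα : 1 < α) (K₁ K₂ : S → Y → ℝ)
    (h10 : ∀ s y, 0 ≤ K₁ s y) (h11 : ∀ s, ∑ y, K₁ s y = 1)
    (h20 : ∀ s y, 0 ≤ K₂ s y) (h21 : ∀ s, ∑ y, K₂ s y = 1)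
    {ε : ℝ} (hε : ∀ s, ∑ y, |K₁ s y - K₂ s y| ≤ ε) :
    |(⨆ p : {p : S → ℝ // (∀ s, 0 ≤ p s) ∧ ∑ s, p s = 1},
        arimotoMI α (fun s y => p.1 s * K₁ s y)) -
      ⨆ p : {p : S → ℝ // (∀ s, 0 ≤ p s) ∧ ∑ s, p s = 1},
        arimotoMI α (fun s y => p.1 s * K₂ s y)| ≤
      (α / (α - 1)) * ((Fintype.card S : ℝ) ^ (1 - 1/α)) * ε := by
  classical
  have hα0 : (0:ℝ) < α := by linarith
  have hα1 : (0:ℝ) < α - 1 := by linarith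
  have hαd : (0:ℝ) < α / (α - 1) := by positivity
  have hcard : (0:ℝ) < Fintype.card S := by exact_mod_cast Fintype.card_pos
  set c1 : ℝ := (Fintype.card S : ℝ) ^ (1 - 1/α) with hc1def
  have hc1 : 0 < c1 := Real.rpow_pos_of_pos hcard _
  have hε0 : 0 ≤ ε :=
    le_trans (Finset.sum_nonneg fun y _ => abs_nonneg _) (hε (Classical.arbitrary S))
  haveI : Nonempty {p : S → ℝ // (∀ s, 0 ≤ p s) ∧ ∑ s, p s = 1} := by
    refine ⟨⟨fun s => if s = Classical.arbitrary S then 1 else 0, fun s => ?_, ?_⟩⟩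
    · dsimp only; split <;> norm_num
    · simp
  -- per-point bound
  have key : ∀ p : {p : S → ℝ // (∀ s, 0 ≤ p s) ∧ ∑ s, p s = 1},
      |arimotoMI α (fun s y => p.1 s * K₁ s y) - arimotoMI α (fun s y => p.1 s * K₂ s y)|
        ≤ (α / (α - 1)) * c1 * ε := by
    rintro ⟨q, hq0, hq1⟩
    obtain ⟨rep1, hD, hDN1, hN1⟩ := aux_channel_facts hα K₁ h10 h11 q hq0 hq1
    obtain ⟨rep2, -, hDN2, hN2⟩ := aux_channel_facts hα K₂ h20 h21 q hq0 hq1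
    set D : ℝ := (∑ s, q s ^ α) ^ (1/α) with hDdef
    set N₁ : ℝ := ∑ y, (∑ s, |q s * K₁ s y| ^ α) ^ (1/α) with hN1def
    set N₂ : ℝ := ∑ y, (∑ s, |q s * K₂ s y| ^ α) ^ (1/α) with hN2def
    have hDc : c1⁻¹ ≤ D := by
      rw [inv_eq_one_div, div_le_iff₀ hc1]
      nlinarith
    have hc1inv : (0:ℝ) < c1⁻¹ := by positivity
    have hD0 : 0 < D := lt_of_lt_of_le hc1inv hDc
    have hN1c : c1⁻¹ ≤ N₁ := le_trans hDc hDN1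
    have hN2c : c1⁻¹ ≤ N₂ := le_trans hDc hDN2
    have hN10 : 0 < N₁ := lt_of_lt_of_le hc1inv hN1c
    have hN20 : 0 < N₂ := lt_of_lt_of_le hc1inv hN2c
    -- |N₁ - N₂| ≤ ε
    have hNdiff : |N₁ - N₂| ≤ ε := by
      have step1 : |N₁ - N₂| ≤
          ∑ y, |(∑ s, |q s * K₁ s y| ^ α) ^ (1/α) - (∑ s, |q s * K₂ s y| ^ α) ^ (1/α)| := by
        rw [hN1def, hN2def, ← Finset.sum_sub_distrib]
        exact Finset.abs_sum_le_sum_abs _ _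
      have step2 : ∀ y : Y,
          |(∑ s, |q s * K₁ s y| ^ α) ^ (1/α) - (∑ s, |q s * K₂ s y| ^ α) ^ (1/α)| ≤
            (∑ s, |q s * K₁ s y - q s * K₂ s y| ^ α) ^ (1/α) := by
        intro y
        have tri : ∀ u w : S → ℝ,
            (∑ s, |u s| ^ α) ^ (1/α) - (∑ s, |w s| ^ α) ^ (1/α) ≤
              (∑ s, |u s - w s| ^ α) ^ (1/α) := by
          intro u w
          have h := Real.Lp_add_le Finset.univ w (fun s => u s - w s) (le_of_lt hα)
          have e : ∀ s : S, w s + (u s - w s) = u s := fun s => by ring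
          simp only [e] at h
          linarith
        rw [abs_sub_le_iff]
        refine ⟨tri _ _, ?_⟩
        have h2 := tri (fun s => q s * K₂ s y) (fun s => q s * K₁ s y)
        have e : ∀ s : S, |q s * K₂ s y - q s * K₁ s y| = |q s * K₁ s y - q s * K₂ s y| :=
          fun s => abs_sub_comm _ _
        simp only [e] at h2
        exact h2
      have step3 : ∀ y : Y,
          (∑ s, |q s * K₁ s y - q s * K₂ s y| ^ α) ^ (1/α) ≤
            ∑ s, q s * |K₁ s y - K₂ s y| := by
        intro y
        have h := aux_aNorm_le_sum (le_of_lt hα) Finset.univ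
          (fun s => |q s * K₁ s y - q s * K₂ s y|) (fun s _ => abs_nonneg _)
        have e : ∀ s : S, |q s * K₁ s y - q s * K₂ s y| = q s * |K₁ s y - K₂ s y| := by
          intro s
          rw [← mul_sub, abs_mul, abs_of_nonneg (hq0 s)]
        calc (∑ s, |q s * K₁ s y - q s * K₂ s y| ^ α) ^ (1/α)
            ≤ ∑ s, |q s * K₁ s y - q s * K₂ s y| := h
          _ = ∑ s, q s * |K₁ s y - K₂ s y| := Finset.sum_congr rfl fun s _ => e s
      calc |N₁ - N₂|
          ≤ ∑ y, |(∑ s, |q s * K₁ s y| ^ α) ^ (1/α) -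
              (∑ s, |q s * K₂ s y| ^ α) ^ (1/α)| := step1
        _ ≤ ∑ y, ∑ s, q s * |K₁ s y - K₂ s y| := Finset.sum_le_sum fun y _ =>
            le_trans (step2 y) (step3 y)
        _ = ∑ s, q s * ∑ y, |K₁ s y - K₂ s y| := by
            rw [Finset.sum_comm]
            exact Finset.sum_congr rfl fun s _ => by rw [Finset.mul_sum]
        _ ≤ ∑ s, q s * ε := Finset.sum_le_sum fun s _ =>
            mul_le_mul_of_nonneg_left (hε s) (hq0 s)
        _ = ε := by rw [← Finset.sum_mul, hq1, one_mul]
    -- put together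
    rw [rep1, rep2, ← mul_sub, abs_mul, abs_of_pos hαd,
      Real.log_div hN10.ne' hD0.ne', Real.log_div hN20.ne' hD0.ne']
    have hlog : |Real.log N₁ - Real.log N₂| ≤ |N₁ - N₂| / c1⁻¹ :=
      aux_abs_log_sub_log_le hc1inv hN1c hN2c
    have e2 : |N₁ - N₂| / c1⁻¹ = |N₁ - N₂| * c1 := by
      field_simp
    have hfin : |Real.log N₁ - Real.log D - (Real.log N₂ - Real.log D)| ≤ c1 * ε := by
      have : Real.log N₁ - Real.log D - (Real.log N₂ - Real.log D) =
          Real.log N₁ - Real.log N₂ := by ring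
      rw [this]
      calc |Real.log N₁ - Real.log N₂| ≤ |N₁ - N₂| * c1 := by rw [← e2]; exact hlog
        _ ≤ ε * c1 := mul_le_mul_of_nonneg_right hNdiff (le_of_lt hc1)
        _ = c1 * ε := mul_comm _ _
    calc α / (α - 1) * |Real.log N₁ - Real.log D - (Real.log N₂ - Real.log D)|
        ≤ α / (α - 1) * (c1 * ε) := mul_le_mul_of_nonneg_left hfin (le_of_lt hαd)
      _ = α / (α - 1) * c1 * ε := by ring
  -- boundedness
  have bdd : ∀ (K : S → Y → ℝ), (∀ s y, 0 ≤ K s y) → (∀ s, ∑ y, K s y = 1) →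
      ∀ p : {p : S → ℝ // (∀ s, 0 ≤ p s) ∧ ∑ s, p s = 1},
        arimotoMI α (fun s y => p.1 s * K s y) ≤ (α/(α-1)) * Real.log c1 := by
    rintro K hK0 hK1 ⟨q, hq0, hq1⟩
    obtain ⟨rep, hD, hDN, hN⟩ := aux_channel_facts hα K hK0 hK1 q hq0 hq1
    set D : ℝ := (∑ s, q s ^ α) ^ (1/α) with hDdef
    set N : ℝ := ∑ y, (∑ s, |q s * K s y| ^ α) ^ (1/α) with hNdef
    have hDc : c1⁻¹ ≤ D := by
      rw [inv_eq_one_div, div_le_iff₀ hc1]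
      nlinarith
    have hc1inv : (0:ℝ) < c1⁻¹ := by positivity
    have hD0 : 0 < D := lt_of_lt_of_le hc1inv hDc
    have hN0 : 0 < N := lt_of_lt_of_le (lt_of_lt_of_le hc1inv hDc) hDN
    have hratio : N / D ≤ c1 := by
      rw [div_le_iff₀ hD0]
      calc N ≤ 1 := hN
        _ ≤ c1 * D := hD
    rw [rep]
    refine mul_le_mul_of_nonneg_left ?_ (le_of_lt hαd)
    exact Real.log_le_log (div_pos hN0 hD0) hratio
  refine aux_abs_ciSup_sub_ciSup_le ?_ ?_ key
  · exact ⟨(α/(α-1)) * Real.log c1, by rintro _ ⟨p, rfl⟩; exact bdd K₁ h10 h11 p⟩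
  · exact ⟨(α/(α-1)) * Real.log c1, by rintro _ ⟨p, rfl⟩; exact bdd K₂ h20 h21 p⟩

/-- Local Lipschitz continuity of maximal `α`-leakage (`α ∈ (1, ∞)`) in the joint
distribution: the discrepancy is bounded by
`(4α/(α−1)) |S|^{1−1/α} ‖Q₁ − Q₂‖₁ / min_s Q₁-marginal(s)`. -/
theorem stmt_16 {S X Y : Type*} [Fintype S] [Fintype X] [Fintype Y] [Nonempty S]
    (α : ℝ) (hα : 1 < α)
    (Q₁ Q₂ : S → X → ℝ) (W : X → Y → ℝ)
    (hQ₁0 : ∀ s x, 0 ≤ Q₁ s x) (hQ₁1 : ∑ s, ∑ x, Q₁ s x = 1)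
    (hQ₂0 : ∀ s x, 0 ≤ Q₂ s x) (hQ₂1 : ∑ s, ∑ x, Q₂ s x = 1)
    (hW0 : ∀ x y, 0 ≤ W x y) (hW1 : ∀ x, ∑ y, W x y = 1)
    (hm₁ : ∀ s, 0 < ∑ x, Q₁ s x) (hm₂ : ∀ s, 0 < ∑ x, Q₂ s x) :
    |maxAlphaLeakage α Q₁ W - maxAlphaLeakage α Q₂ W| ≤
      (4 * α / (α - 1)) * (Fintype.card S : ℝ) ^ (1 - 1 / α) *
        (∑ s, ∑ x, |Q₁ s x - Q₂ s x|) /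
          Finset.univ.inf' Finset.univ_nonempty (fun s => ∑ x, Q₁ s x) := by
  classical
  have hα0 : (0:ℝ) < α := by linarith
  have hα1 : (0:ℝ) < α - 1 := by linarith
  set m : ℝ := Finset.univ.inf' Finset.univ_nonempty (fun s => ∑ x, Q₁ s x) with hmdef
  have hms : ∀ s, m ≤ ∑ x, Q₁ s x := fun s => Finset.inf'_le _ (Finset.mem_univ s)
  have hm0 : 0 < m := by
    rw [hmdef, Finset.lt_inf'_iff]
    exact fun s _ => hm₁ s
  set T : ℝ := ∑ s, ∑ x, |Q₁ s x - Q₂ s x| with hTdef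
  have hT0 : 0 ≤ T :=
    Finset.sum_nonneg fun s _ => Finset.sum_nonneg fun x _ => abs_nonneg _
  -- channel facts
  have hK10 : ∀ (s : S) (y : Y), 0 ≤ ∑ x, (Q₁ s x / (∑ x', Q₁ s x')) * W x y :=
    fun s y => Finset.sum_nonneg fun x _ =>
      mul_nonneg (div_nonneg (hQ₁0 s x) (le_of_lt (hm₁ s))) (hW0 x y)
  have hK20 : ∀ (s : S) (y : Y), 0 ≤ ∑ x, (Q₂ s x / (∑ x', Q₂ s x')) * W x y :=
    fun s y => Finset.sum_nonneg fun x _ =>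
      mul_nonneg (div_nonneg (hQ₂0 s x) (le_of_lt (hm₂ s))) (hW0 x y)
  have hrow : ∀ (Q : S → X → ℝ), (∀ s, 0 < ∑ x, Q s x) →
      ∀ s : S, ∑ y, ∑ x, (Q s x / (∑ x', Q s x')) * W x y = 1 := by
    intro Q hm s
    rw [Finset.sum_comm]
    have e : ∀ x : X, ∑ y, (Q s x / (∑ x', Q s x')) * W x y = Q s x / (∑ x', Q s x') :=
      fun x => by rw [← Finset.mul_sum, hW1, mul_one]
    rw [Finset.sum_congr rfl fun x _ => e x, ← Finset.sum_div, div_self (hm s).ne']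
  -- per-state channel discrepancy
  have hε : ∀ s : S, ∑ y, |(∑ x, (Q₁ s x / (∑ x', Q₁ s x')) * W x y) -
      ∑ x, (Q₂ s x / (∑ x', Q₂ s x')) * W x y| ≤ 2 * T / m := by
    intro s
    have hM₁ : (0:ℝ) < ∑ x, Q₁ s x := hm₁ s
    have hM₂ : (0:ℝ) < ∑ x, Q₂ s x := hm₂ s
    set M₁ : ℝ := ∑ x, Q₁ s x with hM₁def
    set M₂ : ℝ := ∑ x, Q₂ s x with hM₂def
    set Ds : ℝ := ∑ x, |Q₁ s x - Q₂ s x| with hDsdef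
    have hDs0 : 0 ≤ Ds := Finset.sum_nonneg fun x _ => abs_nonneg _
    have hDsT : Ds ≤ T := by
      rw [hTdef, hDsdef]
      exact Finset.single_le_sum
        (f := fun s => ∑ x, |Q₁ s x - Q₂ s x|)
        (fun s _ => Finset.sum_nonneg fun x _ => abs_nonneg _) (Finset.mem_univ s)
    have hΔm : |M₁ - M₂| ≤ Ds := by
      rw [hM₁def, hM₂def, ← Finset.sum_sub_distrib]
      exact Finset.abs_sum_le_sum_abs _ _
    have e1 : ∀ y : Y, (∑ x, (Q₁ s x / M₁) * W x y) - ∑ x, (Q₂ s x / M₂) * W x y =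
        ∑ x, (Q₁ s x / M₁ - Q₂ s x / M₂) * W x y := fun y => by
      rw [← Finset.sum_sub_distrib]
      exact Finset.sum_congr rfl fun x _ => (sub_mul _ _ _).symm
    have stepA : ∑ y, |(∑ x, (Q₁ s x / M₁) * W x y) - ∑ x, (Q₂ s x / M₂) * W x y| ≤
        ∑ x, |Q₁ s x / M₁ - Q₂ s x / M₂| := by
      calc ∑ y, |(∑ x, (Q₁ s x / M₁) * W x y) - ∑ x, (Q₂ s x / M₂) * W x y|
          ≤ ∑ y, ∑ x, |Q₁ s x / M₁ - Q₂ s x / M₂| * W x y := by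
            refine Finset.sum_le_sum fun y _ => ?_
            rw [e1 y]
            refine le_trans (Finset.abs_sum_le_sum_abs _ _)
              (Finset.sum_le_sum fun x _ => ?_)
            rw [abs_mul, abs_of_nonneg (hW0 x y)]
        _ = ∑ x, |Q₁ s x / M₁ - Q₂ s x / M₂| := by
            rw [Finset.sum_comm]
            exact Finset.sum_congr rfl fun x _ => by
              rw [← Finset.mul_sum, hW1, mul_one]
    have stepB : ∑ x, |Q₁ s x / M₁ - Q₂ s x / M₂| ≤ 2 * Ds / M₁ := by
      have hx : ∀ x : X, |Q₁ s x / M₁ - Q₂ s x / M₂| ≤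
          |Q₁ s x - Q₂ s x| / M₁ + Q₂ s x * |M₂ - M₁| / (M₁ * M₂) := by
        intro x
        have decomp : Q₁ s x / M₁ - Q₂ s x / M₂ =
            (Q₁ s x - Q₂ s x) / M₁ + Q₂ s x * (M₂ - M₁) / (M₁ * M₂) := by
          field_simp
          ring
        rw [decomp]
        refine le_trans (abs_add_le _ _) ?_
        rw [abs_div, abs_of_pos hM₁, abs_div, abs_mul, abs_of_nonneg (hQ₂0 s x),
          abs_of_pos (mul_pos hM₁ hM₂)]
      calc ∑ x, |Q₁ s x / M₁ - Q₂ s x / M₂|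
          ≤ ∑ x, (|Q₁ s x - Q₂ s x| / M₁ + Q₂ s x * |M₂ - M₁| / (M₁ * M₂)) :=
            Finset.sum_le_sum fun x _ => hx x
        _ = Ds / M₁ + M₂ * |M₂ - M₁| / (M₁ * M₂) := by
            rw [Finset.sum_add_distrib, ← Finset.sum_div]
            congr 1
            rw [← Finset.sum_div, ← Finset.sum_mul]
        _ = Ds / M₁ + |M₂ - M₁| / M₁ := by
            congr 1
            field_simp
        _ ≤ Ds / M₁ + Ds / M₁ := by
            have : |M₂ - M₁| ≤ Ds := by rw [abs_sub_comm]; exact hΔm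
            gcongr
        _ = 2 * Ds / M₁ := by ring
    calc ∑ y, |(∑ x, (Q₁ s x / (∑ x', Q₁ s x')) * W x y) -
          ∑ x, (Q₂ s x / (∑ x', Q₂ s x')) * W x y|
        ≤ 2 * Ds / M₁ := le_trans stepA stepB
      _ ≤ 2 * T / m := div_le_div₀ (by linarith) (by linarith) hm0 (hms s)
  have main := aux_leakage_diff (S := S) (Y := Y) hα
    (fun s y => ∑ x, (Q₁ s x / (∑ x', Q₁ s x')) * W x y)
    (fun s y => ∑ x, (Q₂ s x / (∑ x', Q₂ s x')) * W x y)
    hK10 (hrow Q₁ hm₁) hK20 (hrow Q₂ hm₂) (ε := 2 * T / m) hε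
  have hc1 : (0:ℝ) < (Fintype.card S : ℝ) ^ (1 - 1/α) := by
    have hcard : (0:ℝ) < Fintype.card S := by exact_mod_cast Fintype.card_pos
    positivity
  have hfinal : (α / (α - 1)) * ((Fintype.card S : ℝ) ^ (1 - 1/α)) * (2 * T / m) ≤
      (4 * α / (α - 1)) * (Fintype.card S : ℝ) ^ (1 - 1 / α) * T / m := by
    have e1 : (α / (α - 1)) * ((Fintype.card S : ℝ) ^ (1 - 1/α)) * (2 * T / m) =
        (2 * ((α / (α - 1)) * ((Fintype.card S : ℝ) ^ (1 - 1/α)) * T)) / m := by ring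
    have e2 : (4 * α / (α - 1)) * (Fintype.card S : ℝ) ^ (1 - 1 / α) * T / m =
        (4 * ((α / (α - 1)) * ((Fintype.card S : ℝ) ^ (1 - 1/α)) * T)) / m := by ring
    rw [e1, e2]
    have hx : 0 ≤ (α / (α - 1)) * ((Fintype.card S : ℝ) ^ (1 - 1/α)) * T := by positivity
    gcongr
    linarith
  exact le_trans main hfinal
end
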